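/- arXiv:math/9808024 — 7 statements merged into one kernel-verified Lean document; each statement's English description precedes it below -/
import Mathlib

section
/- Let 1 < q < 1.06 and work in units 2mω = 1. For all m', n ∈ ℕ, the matrix elements of the q-deformed quartic perturbation satisfy h(m',n) ≤ C(q), where C(q) := 4 q^{10} [3]_4 [2]_8 / (27 (1 − q^{−2})²). -/
noncomputable section

/-- The q-number `[x] = (1 - q^(-2x))/(1 - q^(-2))` for real `x`. -/
def qnum (q x : ℝ) : ℝ := (1 - q ^ (-2 * x)) / (1 - q ^ (-2 : ℝ))

/-- `[n]` for a natural number argument. -/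
def qnumN (q : ℝ) (n : ℕ) : ℝ := qnum q (n : ℝ)

/-- The q-bracket `[k]_i = (1 - q^(-k i))/(1 - q^(-i))`. -/
def qbr (q : ℝ) (k i : ℕ) : ℝ := (1 - q ^ (-((k : ℤ) * i))) / (1 - q ^ (-(i : ℤ)))

/-- Diagonal matrix element `⟨n|X⁴|n⟩`. -/
def X4diag (q : ℝ) (n : ℕ) : ℝ :=
  q ^ (8 * n + 6) *
    (qnum q ((n : ℝ) + 1) *
        (qnum q ((n : ℝ) + 2) + q ^ (-4 : ℤ) * qnum q ((n : ℝ) + 1)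
          + q ^ (-8 : ℤ) * qnum q (n : ℝ))
      + q ^ (-8 : ℤ) * qnum q (n : ℝ) *
        (qnum q ((n : ℝ) + 1) + q ^ (-4 : ℤ) * qnum q (n : ℝ)
          + q ^ (-8 : ℤ) * qnum q ((n : ℝ) - 1)))

/-- Off-diagonal matrix element `⟨n+4|X⁴|n⟩`. -/
def X4off4 (q : ℝ) (n : ℕ) : ℝ :=
  q ^ (8 * n + 14) *
    Real.sqrt (qnum q ((n : ℝ) + 1) * qnum q ((n : ℝ) + 2) * qnum q ((n : ℝ) + 3)
      * qnum q ((n : ℝ) + 4))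

/-- Off-diagonal matrix element `⟨n+2|X⁴|n⟩`. -/
def X4off2 (q : ℝ) (n : ℕ) : ℝ :=
  q ^ (8 * n + 12) * Real.sqrt (qnum q ((n : ℝ) + 1) * qnum q ((n : ℝ) + 2)) *
    (qnum q ((n : ℝ) + 3) + q ^ (-4 : ℤ) * qnum q ((n : ℝ) + 2)
      + q ^ (-8 : ℤ) * qnum q ((n : ℝ) + 1) + q ^ (-12 : ℤ) * qnum q (n : ℝ))

/-- The full symmetric matrix `⟨m|X⁴|n⟩`. -/
def X4 (q : ℝ) (m n : ℕ) : ℝ :=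
  if m = n then X4diag q n
  else if m = n + 4 then X4off4 q n
  else if n = m + 4 then X4off4 q m
  else if m = n + 2 then X4off2 q n
  else if n = m + 2 then X4off2 q m
  else 0

/-- Matrix elements `h(m,n) = ⟨m|H'|n⟩` of `H' = (X⁴ Q̂⁵ + Q̂⁵ X⁴)/2`. -/
def hmat (q : ℝ) (m n : ℕ) : ℝ :=
  (1 / 2) * (q ^ (-(10 * (m : ℤ))) + q ^ (-(10 * (n : ℤ)))) * X4 q m n

/-- The bound `C(q) = 4 q^10 [3]₄ [2]₈ / (27 (1 - q^(-2))²)`. -/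
def Cq (q : ℝ) : ℝ := 4 * q ^ 10 * qbr q 3 4 * qbr q 2 8 / (27 * (1 - q ^ (-2 : ℤ)) ^ 2)

/-- The `k`-th order Rayleigh–Schrödinger term `E_n^{(k)}(Δ, γ)`. -/
def RSterm (q ω : ℝ) (n : ℕ) (Δ γ : ℂ) (k : ℕ) : ℂ :=
  if k = 1 then γ * (hmat q n n : ℂ)
  else
    ∑' ν : Fin (k - 1) → ℕ,
      if ∀ j, ν j ≠ n then
        (let w : ℕ → ℕ := fun j => if h : j < k - 1 then ν ⟨j, h⟩ else n
        (γ * (hmat q n (w 0) : ℂ)) *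
          (∏ j ∈ Finset.Icc 2 (k - 1),
            (γ * (hmat q (w (j - 2)) (w (j - 1)) : ℂ)
              - Δ * (if w (j - 2) = w (j - 1) then 1 else 0))) *
          (γ * (hmat q (w (k - 2)) n : ℂ)) /
          (∏ j ∈ Finset.range (k - 1),
            ((ω * qnumN q n - ω * qnumN q (w j) : ℝ) : ℂ)))
      else 0

end

section
variable {q : ℝ}

private lemma cube_le {s : ℝ} (h0 : 0 ≤ s) (h1 : s ≤ 1) : s * (1 - s)^2 ≤ 4/27 := by
  nlinarith [mul_nonneg (sq_nonneg (3*s - 1)) (by linarith : (0:ℝ) ≤ 4 - 3*s)]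

private lemma rpow2 (hq : 0 < q) : q ^ (-2 : ℝ) = (q^2)⁻¹ := by
  rw [Real.rpow_neg hq.le]; norm_num

private lemma rbase (hq : 0 < q) (m : ℕ) : q ^ (-2 * (m:ℝ)) = ((q^2)⁻¹) ^ m := by
  rw [← rpow2 hq, ← Real.rpow_natCast (q ^ (-2:ℝ)) m, ← Real.rpow_mul hq.le]

private lemma qnum_eq (hq : 1 < q) (m : ℕ) :
    qnum q (m:ℝ) = (1 - ((q^2)⁻¹)^m) / (1 - (q^2)⁻¹) := by
  have hq0 : 0 < q := lt_trans one_pos hq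
  unfold qnum
  rw [rbase hq0, rpow2 hq0]

private lemma qnum_sub_eq (hq : 1 < q) (m : ℕ) :
    qnum q ((m:ℝ) - 1) = (1 - ((q^2)⁻¹)^m * q^2) / (1 - (q^2)⁻¹) := by
  have hq0 : 0 < q := lt_trans one_pos hq
  unfold qnum
  rw [rpow2 hq0]
  congr 2
  rw [show (-2:ℝ) * ((m:ℝ) - 1) = (-2)*(m:ℝ) + 2 by ring, Real.rpow_add hq0, rbase hq0]
  congr 1
  rw [show (2:ℝ) = ((2:ℕ):ℝ) by norm_num, Real.rpow_natCast]

private lemma zpow10 (m : ℕ) :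
    q ^ (-(10 * (m:ℤ))) = ((q^2)⁻¹) ^ (5*m) := by
  rw [show -(10*(m:ℤ)) = -(((10*m : ℕ)):ℤ) by push_cast; ring, zpow_neg, zpow_natCast,
    show 10*m = 2*(5*m) by ring, pow_mul, ← inv_pow]

private lemma zpownegnn (k : ℕ) : q ^ (-(((2*k : ℕ)):ℤ)) = ((q^2)⁻¹)^k := by
  rw [zpow_neg, zpow_natCast, pow_mul, ← inv_pow]

private lemma powshift (hq : 0 < q) (n c : ℕ) :
    q ^ (8*n+c) * ((q^2)⁻¹) ^ (5*n) = q ^ c * ((q^2)⁻¹) ^ n := by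
  have h1 : ((q^2)⁻¹ : ℝ) ^ (5*n) = (q ^ (10*n))⁻¹ := by
    rw [inv_pow, ← pow_mul, show 2*(5*n) = 10*n by ring]
  have h2 : ((q^2)⁻¹ : ℝ) ^ n = (q ^ (2*n))⁻¹ := by
    rw [inv_pow, ← pow_mul]
  rw [h1, h2]
  have hqne : q ≠ 0 := ne_of_gt hq
  field_simp
  rw [← pow_add, ← pow_add]
  congr 1
  ring

private lemma vfacts (hq1 : 1 < q) (hq2 : q < 1.06) :
    0 < (q^2)⁻¹ ∧ (q^2)⁻¹ < 1 ∧ 0.88 ≤ (q^2)⁻¹ ∧ (q^2)⁻¹ * q^2 = 1 := by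
  have hq0 : 0 < q := lt_trans one_pos hq1
  have h2 : (0:ℝ) < q^2 := by positivity
  have hv0 : (0:ℝ) < (q^2)⁻¹ := by positivity
  have hm : (q^2)⁻¹ * q^2 = 1 := inv_mul_cancel₀ (ne_of_gt h2)
  have hlt : q^2 < 1.1236 := by nlinarith
  have h1 : 1 < q^2 := by nlinarith
  refine ⟨hv0, ?_, ?_, hm⟩
  · nlinarith [mul_lt_mul_of_pos_left h1 hv0]
  · nlinarith [mul_lt_mul_of_pos_left hlt hv0]


private lemma cube_le' {s c : ℝ} (hs : 0 ≤ s) (hc : 0 < c) (h1 : c*s ≤ 1) :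
    s * (1 - c*s)^2 ≤ 4/(27*c) := by
  have h2 := cube_le (mul_nonneg hc.le hs) h1
  rw [le_div_iff₀ (by positivity)]
  nlinarith [h2]

private lemma frac_id (v t Q : ℝ) (hP : 1 - v ≠ 0) :
    (1-t*v)/(1-v) * ((1-t*v^2)/(1-v) + v^2*((1-t*v)/(1-v)) + v^4*((1-t)/(1-v)))
      + v^4*((1-t)/(1-v)) * ((1-t*v)/(1-v) + v^2*((1-t)/(1-v)) + v^4*((1-t*Q)/(1-v)))
    = ((1-t*v)*((1-t*v^2) + v^2*(1-t*v) + v^4*(1-t))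
        + v^4*(1-t)*((1-t*v) + v^2*(1-t) + v^4*(1-t*Q))) / (1-v)^2 := by
  rw [eq_div_iff (pow_ne_zero 2 hP)]
  field_simp

set_option maxHeartbeats 1000000 in
private lemma case_diag (hq1 : 1 < q) (hq2 : q < 1.06) (n : ℕ) :
    (1 / 2) * (q ^ (-(10 * (n : ℤ))) + q ^ (-(10 * (n : ℤ)))) * X4diag q n ≤
      4 * q^10 * ((1 + ((q^2)⁻¹)^2 + ((q^2)⁻¹)^4) * (1 + ((q^2)⁻¹)^4))
        / (27 * (1 - (q^2)⁻¹)^2) := by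
  obtain ⟨hv0, hv1, hv88, hvq⟩ := vfacts hq1 hq2
  have hq0 : (0:ℝ) < q := lt_trans one_pos hq1
  set v : ℝ := (q^2)⁻¹ with hv
  have e4 : (q:ℝ) ^ (-4:ℤ) = v^2 := by
    rw [show (-4:ℤ) = -((4:ℕ):ℤ) by norm_num, zpow_neg, zpow_natCast, hv, inv_pow, ← pow_mul]
  have e8 : (q:ℝ) ^ (-8:ℤ) = v^4 := by
    rw [show (-8:ℤ) = -((8:ℕ):ℤ) by norm_num, zpow_neg, zpow_natCast, hv, inv_pow, ← pow_mul]
  set t : ℝ := v^n with htdef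
  have ht0 : 0 < t := pow_pos hv0 n
  have ht1 : t ≤ 1 := pow_le_one₀ hv0.le hv1.le
  have hP : (0:ℝ) < 1 - v := by linarith
  have hq2gt : (1:ℝ) ≤ q^2 := by nlinarith
  have E0 : qnum q (n:ℝ) = (1 - t)/(1-v) := by rw [qnum_eq hq1 n]
  have E1 : qnum q ((n:ℝ)+1) = (1 - t*v)/(1-v) := by
    rw [show ((n:ℝ)+1) = (((n+1:ℕ)):ℝ) by push_cast; ring, qnum_eq hq1, pow_succ]
  have E2 : qnum q ((n:ℝ)+2) = (1 - t*v^2)/(1-v) := by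
    rw [show ((n:ℝ)+2) = (((n+2:ℕ)):ℝ) by push_cast; ring, qnum_eq hq1, pow_add]
  have Em1 : qnum q ((n:ℝ)-1) = (1 - t*q^2)/(1-v) := by
    rw [qnum_sub_eq hq1 n]
  have key : ∀ S : ℝ, (1/2) * (((q^2)⁻¹ ^ (5*n)) + ((q^2)⁻¹ ^ (5*n))) * (q ^ (8*n+6) * S)
      = q^6 * t * S := by
    intro S
    calc (1/2) * (((q^2)⁻¹ ^ (5*n)) + ((q^2)⁻¹ ^ (5*n))) * (q ^ (8*n+6) * S)
        = (q ^ (8*n+6) * ((q^2)⁻¹) ^ (5*n)) * S := by ring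
      _ = (q^6 * ((q^2)⁻¹) ^ n) * S := by rw [powshift hq0 n 6]
      _ = q^6 * t * S := by rw [← hv, ← htdef]
  have hrep : (1 / 2) * ((q:ℝ) ^ (-(10 * (n : ℤ))) + q ^ (-(10 * (n : ℤ)))) * X4diag q n
      = q^6 * t *
        (((1-t*v) * ((1-t*v^2) + v^2*(1-t*v) + v^4*(1-t))
          + v^4*(1-t)*((1-t*v) + v^2*(1-t) + v^4*(1-t*q^2))) / (1-v)^2) := by
    unfold X4diag
    rw [E0, E1, E2, Em1, e4, e8, zpow10 n, key, frac_id v t (q^2) (ne_of_gt hP)]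
  rw [hrep]
  clear_value v t
  clear e4 e8 E0 E1 E2 Em1 key hrep hv htdef
  -- bounds
  have hv2le : v^2 ≤ 1 := by nlinarith
  have h1v2 : 0 ≤ 1 - v^2 := by nlinarith
  have htv0 : 0 ≤ t*(1-v^2) := mul_nonneg ht0.le h1v2
  have htv0' : 0 ≤ t*(1-v) := mul_nonneg ht0.le hP.le
  have htv2 : t*v^2 ≤ 1 := by nlinarith [mul_nonneg ht0.le h1v2]
  set M : ℝ := 1 - t*v^2 with hM
  have hM0 : 0 ≤ M := by linarith
  have hqv2 : v^2 ≤ q^2 := by linarith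
  have h1tv : 1 - t*v ≤ M := by nlinarith [mul_nonneg (mul_nonneg ht0.le hv0.le) hP.le]
  have h1tv0 : 0 ≤ 1 - t*v := by nlinarith [mul_nonneg ht0.le hP.le]
  have h1t : 1 - t ≤ M := by nlinarith [mul_nonneg ht0.le h1v2]
  have hqm : 1 - t*q^2 ≤ M := by nlinarith [mul_nonneg ht0.le (by linarith : (0:ℝ) ≤ q^2 - v^2)]
  have hB1 : (1-t*v^2) + v^2*(1-t*v) + v^4*(1-t) ≤ (1+v^2+v^4)*M := by
    nlinarith [mul_nonneg (mul_nonneg ht0.le (pow_nonneg hv0.le 3)) hP.le,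
      mul_nonneg (mul_nonneg ht0.le (pow_nonneg hv0.le 4)) h1v2]
  have hB2 : (1-t*v) + v^2*(1-t) + v^4*(1-t*q^2) ≤ (1+v^2+v^4)*M := by
    nlinarith [mul_nonneg (mul_nonneg ht0.le hv0.le) hP.le,
      mul_nonneg (mul_nonneg ht0.le (pow_nonneg hv0.le 2)) h1v2,
      mul_nonneg (mul_nonneg ht0.le (pow_nonneg hv0.le 4)) (by linarith : (0:ℝ) ≤ q^2 - v^2)]
  have hB1pos : 0 ≤ (1-t*v^2) + v^2*(1-t*v) + v^4*(1-t) := by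
    nlinarith [mul_nonneg (pow_nonneg hv0.le 2) h1tv0,
      mul_nonneg (pow_nonneg hv0.le 4) (by linarith : (0:ℝ) ≤ 1 - t)]
  have hBM : 0 ≤ (1+v^2+v^4)*M := by
    apply mul_nonneg _ hM0
    positivity
  have hterm1 : (1-t*v) * ((1-t*v^2) + v^2*(1-t*v) + v^4*(1-t)) ≤ M * ((1+v^2+v^4)*M) :=
    mul_le_mul h1tv hB1 hB1pos hM0
  have hterm2 : v^4*(1-t)*((1-t*v) + v^2*(1-t) + v^4*(1-t*q^2)) ≤ v^4*M*((1+v^2+v^4)*M) := by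
    calc v^4*(1-t)*((1-t*v) + v^2*(1-t) + v^4*(1-t*q^2))
        ≤ v^4*(1-t)*((1+v^2+v^4)*M) := by
          apply mul_le_mul_of_nonneg_left hB2
            (mul_nonneg (pow_nonneg hv0.le 4) (by linarith : (0:ℝ) ≤ 1 - t))
      _ ≤ v^4*M*((1+v^2+v^4)*M) := by
          apply mul_le_mul_of_nonneg_right _ hBM
          exact mul_le_mul_of_nonneg_left h1t (pow_nonneg hv0.le 4)
  have hE : (1-t*v) * ((1-t*v^2) + v^2*(1-t*v) + v^4*(1-t))
          + v^4*(1-t)*((1-t*v) + v^2*(1-t) + v^4*(1-t*q^2))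
      ≤ (1+v^4)*((1+v^2+v^4)*M^2) := by
    calc (1-t*v) * ((1-t*v^2) + v^2*(1-t*v) + v^4*(1-t))
          + v^4*(1-t)*((1-t*v) + v^2*(1-t) + v^4*(1-t*q^2))
        ≤ M * ((1+v^2+v^4)*M) + v^4*M*((1+v^2+v^4)*M) := add_le_add hterm1 hterm2
      _ = (1+v^4)*((1+v^2+v^4)*M^2) := by ring
  have hcube : (t*v^2) * (1 - t*v^2)^2 ≤ 4/27 := cube_le (by positivity) htv2
  have hqq : (q:ℝ)^6 = q^10 * v^2 := by linear_combination (-(q^6) * (v*q^2+1)) * hvq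
  calc q^6 * t * (((1-t*v) * ((1-t*v^2) + v^2*(1-t*v) + v^4*(1-t))
          + v^4*(1-t)*((1-t*v) + v^2*(1-t) + v^4*(1-t*q^2))) / (1-v)^2)
      ≤ q^6 * t * (((1+v^4)*((1+v^2+v^4)*M^2)) / (1-v)^2) := by
        apply mul_le_mul_of_nonneg_left _ (mul_nonneg (by positivity) ht0.le)
        exact (div_le_div_iff_of_pos_right (by positivity)).mpr hE
    _ = (q^6 * t * M^2) * (((1+v^4)*(1+v^2+v^4)) / (1-v)^2) := by ring
    _ ≤ (q^10 * (4/27)) * (((1+v^4)*(1+v^2+v^4)) / (1-v)^2) := by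
        apply mul_le_mul_of_nonneg_right _ (by positivity)
        have h2 : q^6 * t * M^2 = q^10 * ((t*v^2)*(1-t*v^2)^2) := by rw [hqq, hM]; ring
        rw [h2]
        exact mul_le_mul_of_nonneg_left hcube (by positivity)
    _ = 4 * q^10 * ((1 + v^2 + v^4) * (1 + v^4)) / (27 * (1 - v)^2) := by
        rw [eq_div_iff (ne_of_gt (by positivity : (0:ℝ) < 27*(1-v)^2))]
        field_simp
end


private lemma frac_id2 (t a c d : ℝ) (hd : d ≠ 0) :
    t * (a/d * (c * (a/d))) = c * ((t*a^2)/d^2) := by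
  field_simp

set_option maxHeartbeats 1000000 in
private lemma case_off4 (hq1 : 1 < q) (hq2 : q < 1.06) (n : ℕ) :
    (1 / 2) * (q ^ (-(10 * ((n+4 : ℕ) : ℤ))) + q ^ (-(10 * (n : ℤ)))) * X4off4 q n ≤
      4 * q^10 * ((1 + ((q^2)⁻¹)^2 + ((q^2)⁻¹)^4) * (1 + ((q^2)⁻¹)^4))
        / (27 * (1 - (q^2)⁻¹)^2) := by
  obtain ⟨hv0, hv1, hv88, hvq⟩ := vfacts hq1 hq2
  have hq0 : (0:ℝ) < q := lt_trans one_pos hq1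
  set v : ℝ := (q^2)⁻¹ with hv
  set t : ℝ := v^n with htdef
  have ht0 : 0 < t := pow_pos hv0 n
  have ht1 : t ≤ 1 := pow_le_one₀ hv0.le hv1.le
  have hP : (0:ℝ) < 1 - v := by linarith
  have E1 : qnum q ((n:ℝ)+1) = (1 - t*v)/(1-v) := by
    rw [show ((n:ℝ)+1) = (((n+1:ℕ)):ℝ) by push_cast; ring, qnum_eq hq1, pow_succ]
  have E2 : qnum q ((n:ℝ)+2) = (1 - t*v^2)/(1-v) := by
    rw [show ((n:ℝ)+2) = (((n+2:ℕ)):ℝ) by push_cast; ring, qnum_eq hq1, pow_add]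
  have E3 : qnum q ((n:ℝ)+3) = (1 - t*v^3)/(1-v) := by
    rw [show ((n:ℝ)+3) = (((n+3:ℕ)):ℝ) by push_cast; ring, qnum_eq hq1, pow_add]
  have E4 : qnum q ((n:ℝ)+4) = (1 - t*v^4)/(1-v) := by
    rw [show ((n:ℝ)+4) = (((n+4:ℕ)):ℝ) by push_cast; ring, qnum_eq hq1, pow_add]
  have hco : (1/2) * ((q:ℝ) ^ (-(10 * ((n+4 : ℕ) : ℤ))) + q ^ (-(10 * (n : ℤ))))
      = (1/2) * (1 + v^20) * v^(5*n) := by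
    rw [zpow10 (n+4), zpow10 n, ← hv, show 5*(n+4) = 5*n + 20 by ring, pow_add]
    ring
  unfold X4off4
  rw [E1, E2, E3, E4, hco]
  have hkle : ∀ k l : ℕ, k ≤ l → 1 - t*v^k ≤ 1 - t*v^l := by
    intro k l hkl
    have := pow_le_pow_of_le_one hv0.le hv1.le hkl
    nlinarith [mul_le_mul_of_nonneg_left this ht0.le]
  have hk0 : ∀ k : ℕ, 0 ≤ 1 - t*v^k := by
    intro k
    have h1 : t*v^k ≤ 1*1 := mul_le_mul ht1 (pow_le_one₀ hv0.le hv1.le) (by positivity) zero_le_one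
    linarith
  set K : ℝ := (1 - t*v^4)/(1-v) with hK
  have hK0 : 0 ≤ K := div_nonneg (hk0 4) hP.le
  have hfle : ∀ k : ℕ, k ≤ 4 → (1 - t*v^k)/(1-v) ≤ K := by
    intro k hk
    exact (div_le_div_iff_of_pos_right hP).mpr (hkle k 4 hk)
  have hf0 : ∀ k : ℕ, 0 ≤ (1 - t*v^k)/(1-v) := fun k => div_nonneg (hk0 k) hP.le
  have hargle : (1-t*v)/(1-v) * ((1-t*v^2)/(1-v)) * ((1-t*v^3)/(1-v)) * ((1-t*v^4)/(1-v))
      ≤ (K*K)^2 := by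
    have hf1 : (1-t*v)/(1-v) ≤ K := by
      have := hfle 1 (by norm_num); rwa [pow_one] at this
    have hf10 : 0 ≤ (1-t*v)/(1-v) := by
      have := hf0 1; rwa [pow_one] at this
    have h12 : (1-t*v)/(1-v) * ((1-t*v^2)/(1-v)) ≤ K*K :=
      mul_le_mul hf1 (hfle 2 (by norm_num)) (hf0 2) hK0
    have h34 : (1-t*v^3)/(1-v) * ((1-t*v^4)/(1-v)) ≤ K*K :=
      mul_le_mul (hfle 3 (by norm_num)) (hfle 4 (by norm_num)) (hf0 4) hK0
    have hre : (1-t*v)/(1-v) * ((1-t*v^2)/(1-v)) * ((1-t*v^3)/(1-v)) * ((1-t*v^4)/(1-v))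
        = ((1-t*v)/(1-v) * ((1-t*v^2)/(1-v))) * ((1-t*v^3)/(1-v) * ((1-t*v^4)/(1-v))) := by
      ring
    rw [hre, show (K*K)^2 = (K*K)*(K*K) by ring]
    exact mul_le_mul h12 h34 (mul_nonneg (hf0 3) (hf0 4)) (mul_nonneg hK0 hK0)
  have hsqrt : Real.sqrt ((1-t*v)/(1-v) * ((1-t*v^2)/(1-v)) * ((1-t*v^3)/(1-v))
        * ((1-t*v^4)/(1-v))) ≤ K*K := by
    calc Real.sqrt ((1-t*v)/(1-v) * ((1-t*v^2)/(1-v)) * ((1-t*v^3)/(1-v)) * ((1-t*v^4)/(1-v)))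
        ≤ Real.sqrt ((K*K)^2) := Real.sqrt_le_sqrt hargle
      _ = K*K := Real.sqrt_sq (mul_nonneg hK0 hK0)
  -- assemble
  have hcoe0 : (0:ℝ) ≤ (1/2) * (1 + v^20) * v^(5*n) := by positivity
  have step1 : (1/2) * (1 + v^20) * v^(5*n) *
        (q ^ (8*n+14) * Real.sqrt ((1-t*v)/(1-v) * ((1-t*v^2)/(1-v)) * ((1-t*v^3)/(1-v))
          * ((1-t*v^4)/(1-v))))
      ≤ (1/2) * (1 + v^20) * v^(5*n) * (q ^ (8*n+14) * (K*K)) := by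
    apply mul_le_mul_of_nonneg_left _ hcoe0
    exact mul_le_mul_of_nonneg_left hsqrt (by positivity)
  refine le_trans step1 ?_
  have step2 : (1/2) * (1 + v^20) * v^(5*n) * (q ^ (8*n+14) * (K*K))
      = (1/2) * (1 + v^20) * (q^14 * t) * (K*K) := by
    calc (1/2) * (1 + v^20) * v^(5*n) * (q ^ (8*n+14) * (K*K))
        = (1/2) * (1 + v^20) * (q ^ (8*n+14) * ((q^2)⁻¹)^(5*n)) * (K*K) := by rw [← hv]; ring
      _ = (1/2) * (1 + v^20) * (q^14 * ((q^2)⁻¹)^n) * (K*K) := by rw [powshift hq0 n 14]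
      _ = (1/2) * (1 + v^20) * (q^14 * t) * (K*K) := by rw [← hv, ← htdef]
  rw [step2, hK]
  clear_value v t
  clear E1 E2 E3 E4 hco step1 step2 hkle hK hv htdef hfle hf0 hargle hsqrt hcoe0
  have hM0 : 0 ≤ 1 - t*v^4 := hk0 4
  have hv4 : (0:ℝ) < v^4 := by positivity
  have htv4 : v^4 * t ≤ 1 := by nlinarith [hk0 4]
  have hcube : t * (1 - v^4*t)^2 ≤ 4/(27*v^4) := cube_le' ht0.le hv4 htv4
  have hcube' : t * ((1-t*v^4)/(1-v) * ((1-t*v^4)/(1-v))) ≤ (4/(27*v^4))/(1-v)^2 := by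
    have e1 : (1-t*v^4)/(1-v) * ((1-t*v^4)/(1-v)) = (1-t*v^4)^2/(1-v)^2 := by
      rw [div_mul_div_comm]
      congr 1 <;> ring
    rw [e1, ← mul_div_assoc, div_le_div_iff₀ (by positivity) (by positivity)]
    calc t * (1-t*v^4)^2 * (1-v)^2
        = (t * (1 - v^4*t)^2) * (1-v)^2 := by ring
      _ ≤ (4/(27*v^4)) * (1-v)^2 := mul_le_mul_of_nonneg_right hcube (by positivity)
  -- numeric inequality
  have l6 : (0.88:ℝ)^6 ≤ v^6 := pow_le_pow_left₀ (by norm_num) hv88 6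
  have l8 : (0.88:ℝ)^8 ≤ v^8 := pow_le_pow_left₀ (by norm_num) hv88 8
  have l10 : (0.88:ℝ)^10 ≤ v^10 := pow_le_pow_left₀ (by norm_num) hv88 10
  have l12 : (0:ℝ) ≤ v^12 := by positivity
  have l14 : (0:ℝ) ≤ v^14 := by positivity
  have h20 : v^20 ≤ 1 := pow_le_one₀ hv0.le hv1.le
  have hnum : 1 + v^20 ≤ 2*(v^6*((1+v^2+v^4)*(1+v^4))) := by nlinarith [l6, l8, l10, l12, l14, h20]
  have hq14 : q^14 * v^6 = q^10 * v^4 := by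
    linear_combination (q^10*v^4*(q^2*v+1)) * hvq
  calc (1/2) * (1 + v^20) * (q^14 * t) * ((1-t*v^4)/(1-v) * ((1-t*v^4)/(1-v)))
      = ((1+v^20) * q^14/2) * (t * ((1-t*v^4)/(1-v) * ((1-t*v^4)/(1-v)))) := by ring
    _ ≤ ((1+v^20) * q^14/2) * ((4/(27*v^4))/(1-v)^2) := by
        apply mul_le_mul_of_nonneg_left hcube' (by positivity)
    _ = ((1+v^20) * q^14 * 2) / (27*v^4*(1-v)^2) := by
        field_simp
        ring
    _ ≤ (2*(v^6*((1+v^2+v^4)*(1+v^4))) * q^14 * 2) / (27*v^4*(1-v)^2) := by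
        apply (div_le_div_iff_of_pos_right (by positivity)).mpr
        nlinarith [mul_le_mul_of_nonneg_right hnum (le_of_lt (by positivity : (0:ℝ) < q^14*2))]
    _ = 4 * q^10 * ((1 + v^2 + v^4) * (1 + v^4)) / (27 * (1 - v)^2) := by
        rw [div_eq_div_iff (by positivity) (by positivity)]
        linear_combination (4*(1+v^2+v^4)*(1+v^4)*27*(1-v)^2) * hq14

set_option maxHeartbeats 1000000 in
private lemma case_off2 (hq1 : 1 < q) (hq2 : q < 1.06) (n : ℕ) :
    (1 / 2) * (q ^ (-(10 * ((n+2 : ℕ) : ℤ))) + q ^ (-(10 * (n : ℤ)))) * X4off2 q n ≤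
      4 * q^10 * ((1 + ((q^2)⁻¹)^2 + ((q^2)⁻¹)^4) * (1 + ((q^2)⁻¹)^4))
        / (27 * (1 - (q^2)⁻¹)^2) := by
  obtain ⟨hv0, hv1, hv88, hvq⟩ := vfacts hq1 hq2
  have hq0 : (0:ℝ) < q := lt_trans one_pos hq1
  set v : ℝ := (q^2)⁻¹ with hv
  have e4 : (q:ℝ) ^ (-4:ℤ) = v^2 := by
    rw [show (-4:ℤ) = -((4:ℕ):ℤ) by norm_num, zpow_neg, zpow_natCast, hv, inv_pow, ← pow_mul]
  have e8 : (q:ℝ) ^ (-8:ℤ) = v^4 := by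
    rw [show (-8:ℤ) = -((8:ℕ):ℤ) by norm_num, zpow_neg, zpow_natCast, hv, inv_pow, ← pow_mul]
  have e12 : (q:ℝ) ^ (-12:ℤ) = v^6 := by
    rw [show (-12:ℤ) = -((12:ℕ):ℤ) by norm_num, zpow_neg, zpow_natCast, hv, inv_pow, ← pow_mul]
  set t : ℝ := v^n with htdef
  have ht0 : 0 < t := pow_pos hv0 n
  have ht1 : t ≤ 1 := pow_le_one₀ hv0.le hv1.le
  have hP : (0:ℝ) < 1 - v := by linarith
  have E0 : qnum q (n:ℝ) = (1 - t)/(1-v) := by rw [qnum_eq hq1 n]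
  have E1 : qnum q ((n:ℝ)+1) = (1 - t*v)/(1-v) := by
    rw [show ((n:ℝ)+1) = (((n+1:ℕ)):ℝ) by push_cast; ring, qnum_eq hq1, pow_succ]
  have E2 : qnum q ((n:ℝ)+2) = (1 - t*v^2)/(1-v) := by
    rw [show ((n:ℝ)+2) = (((n+2:ℕ)):ℝ) by push_cast; ring, qnum_eq hq1, pow_add]
  have E3 : qnum q ((n:ℝ)+3) = (1 - t*v^3)/(1-v) := by
    rw [show ((n:ℝ)+3) = (((n+3:ℕ)):ℝ) by push_cast; ring, qnum_eq hq1, pow_add]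
  have hco : (1/2) * ((q:ℝ) ^ (-(10 * ((n+2 : ℕ) : ℤ))) + q ^ (-(10 * (n : ℤ))))
      = (1/2) * (1 + v^10) * v^(5*n) := by
    rw [zpow10 (n+2), zpow10 n, ← hv, show 5*(n+2) = 5*n + 10 by ring, pow_add]
    ring
  unfold X4off2
  rw [E0, E1, E2, E3, e4, e8, e12, hco]
  have hkle : ∀ k l : ℕ, k ≤ l → 1 - t*v^k ≤ 1 - t*v^l := by
    intro k l hkl
    have := pow_le_pow_of_le_one hv0.le hv1.le hkl
    nlinarith [mul_le_mul_of_nonneg_left this ht0.le]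
  have hk0 : ∀ k : ℕ, 0 ≤ 1 - t*v^k := by
    intro k
    have h1 : t*v^k ≤ 1*1 := mul_le_mul ht1 (pow_le_one₀ hv0.le hv1.le) (by positivity) zero_le_one
    linarith
  set K : ℝ := (1 - t*v^3)/(1-v) with hK
  have hK0 : 0 ≤ K := div_nonneg (hk0 3) hP.le
  have hfle : ∀ k : ℕ, k ≤ 3 → (1 - t*v^k)/(1-v) ≤ K := by
    intro k hk
    exact (div_le_div_iff_of_pos_right hP).mpr (hkle k 3 hk)
  have hf0 : ∀ k : ℕ, 0 ≤ (1 - t*v^k)/(1-v) := fun k => div_nonneg (hk0 k) hP.le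
  have hf1 : (1-t*v)/(1-v) ≤ K := by
    have := hfle 1 (by norm_num); rwa [pow_one] at this
  have hf10 : 0 ≤ (1-t*v)/(1-v) := by
    have := hf0 1; rwa [pow_one] at this
  have hfz : (1-t)/(1-v) ≤ K := by
    have := hfle 0 (by norm_num); rwa [pow_zero, mul_one] at this
  have hfz0 : 0 ≤ (1-t)/(1-v) := by
    have := hf0 0; rwa [pow_zero, mul_one] at this
  have hsqrt : Real.sqrt ((1-t*v)/(1-v) * ((1-t*v^2)/(1-v))) ≤ K := by
    calc Real.sqrt ((1-t*v)/(1-v) * ((1-t*v^2)/(1-v)))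
        ≤ Real.sqrt (K*K) := by
          apply Real.sqrt_le_sqrt
          exact mul_le_mul hf1 (hfle 2 (by norm_num)) (hf0 2) hK0
      _ = K := Real.sqrt_mul_self hK0
  have hB : (1-t*v^3)/(1-v) + v^2*((1-t*v^2)/(1-v)) + v^4*((1-t*v)/(1-v)) + v^6*((1-t)/(1-v))
      ≤ (1+v^2+v^4+v^6)*K := by
    have b2 := mul_le_mul_of_nonneg_left (hfle 2 (by norm_num)) (by positivity : (0:ℝ) ≤ v^2)
    have b1 := mul_le_mul_of_nonneg_left hf1 (by positivity : (0:ℝ) ≤ v^4)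
    have b0 := mul_le_mul_of_nonneg_left hfz (by positivity : (0:ℝ) ≤ v^6)
    have b3 := hfle 3 (by norm_num)
    nlinarith [b0, b1, b2, b3]
  have hB0 : 0 ≤ (1-t*v^3)/(1-v) + v^2*((1-t*v^2)/(1-v)) + v^4*((1-t*v)/(1-v))
      + v^6*((1-t)/(1-v)) := by
    have := hf0 3
    have := hf0 2
    positivity
  have hsB : Real.sqrt ((1-t*v)/(1-v) * ((1-t*v^2)/(1-v))) *
        ((1-t*v^3)/(1-v) + v^2*((1-t*v^2)/(1-v)) + v^4*((1-t*v)/(1-v)) + v^6*((1-t)/(1-v)))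
      ≤ K * ((1+v^2+v^4+v^6)*K) :=
    mul_le_mul hsqrt hB hB0 hK0
  have hcoe0 : (0:ℝ) ≤ (1/2) * (1 + v^10) * v^(5*n) := by positivity
  have step1 : (1/2) * (1 + v^10) * v^(5*n) *
        (q ^ (8*n+12) * Real.sqrt ((1-t*v)/(1-v) * ((1-t*v^2)/(1-v))) *
          ((1-t*v^3)/(1-v) + v^2*((1-t*v^2)/(1-v)) + v^4*((1-t*v)/(1-v)) + v^6*((1-t)/(1-v))))
      ≤ (1/2) * (1 + v^10) * v^(5*n) * (q ^ (8*n+12) * (K * ((1+v^2+v^4+v^6)*K))) := by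
    apply mul_le_mul_of_nonneg_left _ hcoe0
    rw [mul_assoc]
    exact mul_le_mul_of_nonneg_left hsB (by positivity)
  refine le_trans step1 ?_
  have step2 : (1/2) * (1 + v^10) * v^(5*n) * (q ^ (8*n+12) * (K * ((1+v^2+v^4+v^6)*K)))
      = (1/2) * (1 + v^10) * (q^12 * t) * (K * ((1+v^2+v^4+v^6)*K)) := by
    calc (1/2) * (1 + v^10) * v^(5*n) * (q ^ (8*n+12) * (K * ((1+v^2+v^4+v^6)*K)))
        = (1/2) * (1 + v^10) * (q ^ (8*n+12) * ((q^2)⁻¹)^(5*n)) * (K * ((1+v^2+v^4+v^6)*K)) := by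
          rw [← hv]; ring
      _ = (1/2) * (1 + v^10) * (q^12 * ((q^2)⁻¹)^n) * (K * ((1+v^2+v^4+v^6)*K)) := by
          rw [powshift hq0 n 12]
      _ = (1/2) * (1 + v^10) * (q^12 * t) * (K * ((1+v^2+v^4+v^6)*K)) := by rw [← hv, ← htdef]
  rw [step2, hK]
  clear_value v t
  clear E0 E1 E2 E3 hco step1 step2 hkle hK hv htdef hfle hf0 hf1 hf10 hfz hfz0 hsqrt hB hB0 hsB
    hcoe0 e4 e8 e12
  have hv3 : (0:ℝ) < v^3 := by positivity
  have htv3 : v^3 * t ≤ 1 := by nlinarith [hk0 3]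
  have hcube : t * (1 - v^3*t)^2 ≤ 4/(27*v^3) := cube_le' ht0.le hv3 htv3
  have hcube' : t * ((1-t*v^3)/(1-v) * ((1+v^2+v^4+v^6) * ((1-t*v^3)/(1-v))))
      ≤ (1+v^2+v^4+v^6) * ((4/(27*v^3))/(1-v)^2) := by
    have e1 : t * ((1-t*v^3)/(1-v) * ((1+v^2+v^4+v^6) * ((1-t*v^3)/(1-v))))
        = (1+v^2+v^4+v^6) * ((t * (1 - v^3*t)^2)/(1-v)^2) := by
      rw [frac_id2 t (1-t*v^3) (1+v^2+v^4+v^6) (1-v) (ne_of_gt hP)]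
      ring
    rw [e1]
    apply mul_le_mul_of_nonneg_left _ (by positivity)
    exact (div_le_div_iff_of_pos_right (by positivity)).mpr hcube
  -- numeric inequality
  have l4 : (0.88:ℝ)^4 ≤ v^4 := pow_le_pow_left₀ (by norm_num) hv88 4
  have l6 : (0.88:ℝ)^6 ≤ v^6 := pow_le_pow_left₀ (by norm_num) hv88 6
  have l8 : (0.88:ℝ)^8 ≤ v^8 := pow_le_pow_left₀ (by norm_num) hv88 8
  have l10 : (0.88:ℝ)^10 ≤ v^10 := pow_le_pow_left₀ (by norm_num) hv88 10
  have l12 : (0.88:ℝ)^12 ≤ v^12 := pow_le_pow_left₀ (by norm_num) hv88 12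
  have u14 : v^14 ≤ v^8 := pow_le_pow_of_le_one hv0.le hv1.le (by norm_num)
  have u16 : v^16 ≤ v^8 := pow_le_pow_of_le_one hv0.le hv1.le (by norm_num)
  have hv2le : v^2 ≤ 1 := by nlinarith
  have hnum2 : (1+v^10)*(1+v^2+v^4+v^6) ≤ 2*(v^4*((1+v^2+v^4)*(1+v^4))) := by
    nlinarith [l4, l6, l8, l10, l12, u14, u16, hv2le]
  have hq12 : q^12 * v^4 = q^10 * v^3 := by
    linear_combination (q^10*v^3) * hvq
  calc (1/2) * (1 + v^10) * (q^12 * t) * ((1-t*v^3)/(1-v) * ((1+v^2+v^4+v^6) * ((1-t*v^3)/(1-v))))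
      = ((1+v^10) * q^12/2) * (t * ((1-t*v^3)/(1-v) * ((1+v^2+v^4+v^6) * ((1-t*v^3)/(1-v))))) := by
        ring
    _ ≤ ((1+v^10) * q^12/2) * ((1+v^2+v^4+v^6) * ((4/(27*v^3))/(1-v)^2)) := by
        apply mul_le_mul_of_nonneg_left hcube' (by positivity)
    _ = ((1+v^10) * (1+v^2+v^4+v^6) * q^12 * 2) / (27*v^3*(1-v)^2) := by
        field_simp
        ring
    _ ≤ ((2*(v^4*((1+v^2+v^4)*(1+v^4)))) * q^12 * 2) / (27*v^3*(1-v)^2) := by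
        apply (div_le_div_iff_of_pos_right (by positivity)).mpr
        nlinarith [mul_le_mul_of_nonneg_right hnum2 (le_of_lt (by positivity : (0:ℝ) < q^12*2))]
    _ = 4 * q^10 * ((1 + v^2 + v^4) * (1 + v^4)) / (27 * (1 - v)^2) := by
        rw [div_eq_div_iff (by positivity) (by positivity)]
        linear_combination (4*((1+v^2+v^4)*(1+v^4))*27*(1-v)^2) * hq12




private lemma Cq_eq (hq1 : 1 < q) (hq2 : q < 1.06) :
    Cq q = 4 * q^10 * ((1 + ((q^2)⁻¹)^2 + ((q^2)⁻¹)^4) * (1 + ((q^2)⁻¹)^4))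
      / (27 * (1 - (q^2)⁻¹)^2) := by
  obtain ⟨hv0, hv1, hv88, hvq⟩ := vfacts hq1 hq2
  have hq0 : (0:ℝ) < q := lt_trans one_pos hq1
  set v : ℝ := (q^2)⁻¹ with hv
  have ez : ∀ k : ℕ, ((q:ℝ) ^ (((2*k:ℕ)):ℤ))⁻¹ = v ^ k := by
    intro k
    rw [zpow_natCast, hv, inv_pow, ← pow_mul]
  have e2 : ((q:ℝ) ^ (2:ℤ))⁻¹ = v := by have := ez 1; norm_num at this ⊢; exact this
  have e4 : ((q:ℝ) ^ (4:ℤ))⁻¹ = v^2 := by have := ez 2; norm_num at this ⊢; exact this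
  have e8 : ((q:ℝ) ^ (8:ℤ))⁻¹ = v^4 := by have := ez 4; norm_num at this ⊢; exact this
  have e12 : ((q:ℝ) ^ (12:ℤ))⁻¹ = v^6 := by have := ez 6; norm_num at this ⊢; exact this
  have e16 : ((q:ℝ) ^ (16:ℤ))⁻¹ = v^8 := by have := ez 8; norm_num at this ⊢; exact this
  unfold Cq qbr
  norm_num
  simp only [zpow_ofNat] at e2 e4 e8 e12 e16 ⊢
  rw [e4, e8, e12, e16, e2]
  have h2 : 0 < 1 - v^2 := by nlinarith
  have h4 : 0 < 1 - v^4 := by nlinarith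
  have hP : (0:ℝ) < 1 - v := by linarith
  have hden : (0:ℝ) < 27*(1-v)^2 := by positivity
  rw [div_eq_div_iff (ne_of_gt hden) (ne_of_gt hden)]
  field_simp
  ring

set_option maxHeartbeats 1000000 in
/-- For `1 < q < 1.06` (units `2m\omega = 1`), all matrix elements of the
q-deformed quartic perturbation `H'` satisfy `h(m',n) <= C(q)`, where
`C(q) = 4 q^10 [3]_4 [2]_8 / (27 (1 - q^(-2))^2)`. -/
theorem hmat_le_Cq (q : ℝ) (hq1 : 1 < q) (hq2 : q < 1.06) (m' n : ℕ) :
    hmat q m' n ≤ Cq q := by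
  have hCq : Cq q = 4 * q^10 * ((1 + ((q^2)⁻¹)^2 + ((q^2)⁻¹)^4) * (1 + ((q^2)⁻¹)^4))
      / (27 * (1 - (q^2)⁻¹)^2) := Cq_eq hq1 hq2
  have hCq0 : 0 ≤ Cq q := by
    rw [hCq]
    obtain ⟨hv0, hv1, hv88, hvq⟩ := vfacts hq1 hq2
    have hP : (0:ℝ) < 1 - (q^2)⁻¹ := by linarith
    positivity
  unfold hmat X4
  by_cases h1 : m' = n
  · subst h1
    rw [if_pos rfl, hCq]
    exact case_diag hq1 hq2 m'
  · rw [if_neg h1]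
    by_cases h2 : m' = n + 4
    · subst h2
      rw [if_pos rfl, hCq]
      exact case_off4 hq1 hq2 n
    · rw [if_neg h2]
      by_cases h3 : n = m' + 4
      · subst h3
        rw [if_pos rfl, hCq]
        rw [show (q ^ (-(10 * ((m' : ℕ) : ℤ))) + q ^ (-(10 * ((m' + 4 : ℕ) : ℤ))))
            = (q ^ (-(10 * ((m' + 4 : ℕ) : ℤ))) + q ^ (-(10 * ((m' : ℕ) : ℤ)))) from add_comm _ _]
        exact case_off4 hq1 hq2 m'
      · rw [if_neg h3]
        by_cases h4 : m' = n + 2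
        · subst h4
          rw [if_pos rfl, hCq]
          exact case_off2 hq1 hq2 n
        · rw [if_neg h4]
          by_cases h5 : n = m' + 2
          · subst h5
            rw [if_pos rfl, hCq]
            rw [show (q ^ (-(10 * ((m' : ℕ) : ℤ))) + q ^ (-(10 * ((m' + 2 : ℕ) : ℤ))))
                = (q ^ (-(10 * ((m' + 2 : ℕ) : ℤ))) + q ^ (-(10 * ((m' : ℕ) : ℤ)))) from add_comm _ _]
            exact case_off2 hq1 hq2 m'
          · rw [if_neg h5, mul_zero]
            exact hCq0
end

section
/- Let q > 1 and work in units 2mω = 1. For every n ∈ ℕ, (1/2)(1 + q^{−20}) q^{12−2n} [4]_4 [n]² < h(n+2, n) < (1/2)(1 + q^{−20}) q^{12−2n} [4]_4 [n+3]². -/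
section Aux
variable {q : ℝ}

private lemma qnum_mono (hq : 1 < q) {x y : ℝ} (h : x < y) : qnum q x < qnum q y := by
  have hd : 0 < 1 - q ^ (-2 : ℝ) := by
    have : q ^ (-2 : ℝ) < 1 := Real.rpow_lt_one_of_one_lt_of_neg hq (by norm_num)
    linarith
  have hnum : q ^ (-2 * y) < q ^ (-2 * x) :=
    (Real.rpow_lt_rpow_left_iff hq).2 (by linarith)
  exact div_lt_div_of_pos_right (by linarith) hd

private lemma qnum_zero (q : ℝ) : qnum q 0 = 0 := by simp [qnum]

private lemma qnum_nonneg (hq : 1 < q) {x : ℝ} (hx : 0 ≤ x) : 0 ≤ qnum q x := by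
  rcases eq_or_lt_of_le hx with h | h
  · rw [← h, qnum_zero]
  · have := qnum_mono hq h
    rw [qnum_zero] at this; linarith

private lemma qbr44 (hq : 1 < q) :
    qbr q 4 4 = 1 + q ^ (-4:ℤ) + q ^ (-8:ℤ) + q ^ (-12:ℤ) := by
  have hq0 : (0:ℝ) < q := lt_trans one_pos hq
  have h4 : q ^ (-(4:ℤ)) < 1 := by
    rw [zpow_neg]
    exact inv_lt_one_of_one_lt₀ (one_lt_pow₀ (by exact_mod_cast hq) (by norm_num))
  have hne : (1 : ℝ) - q ^ (-(4:ℤ)) ≠ 0 := by linarith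
  unfold qbr
  push_cast
  rw [div_eq_iff (by norm_num at hne ⊢; exact hne)]
  have hne0 : q ≠ 0 := ne_of_gt hq0
  have hz : ∀ k : ℕ, q ^ (-(k:ℤ)) = (q⁻¹) ^ k := fun k => by
    rw [zpow_neg, zpow_natCast, inv_pow]
  rw [show ((-16:ℤ) = -((16:ℕ):ℤ)) by norm_num, show ((-4:ℤ) = -((4:ℕ):ℤ)) by norm_num,
    show ((-8:ℤ) = -((8:ℕ):ℤ)) by norm_num, show ((-12:ℤ) = -((12:ℕ):ℤ)) by norm_num,
    hz, hz, hz, hz]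
  ring

private lemma pow_collect (hq : 1 < q) (n : ℕ) :
    (1/2 : ℝ) * (q ^ (-(10 * ((n:ℤ)+2))) + q ^ (-(10 * (n:ℤ)))) * q ^ ((8*n+12 : ℕ))
    = (1/2) * (1 + q ^ (-20:ℤ)) * q ^ (12 - 2*(n:ℤ)) := by
  have hq0 : (0:ℝ) < q := lt_trans one_pos hq
  have hne : q ≠ 0 := ne_of_gt hq0
  rw [← zpow_natCast q (8*n+12)]
  push_cast
  rw [mul_assoc, add_mul, ← zpow_add₀ hne, ← zpow_add₀ hne,
    show (-(10 * ((n:ℤ) + 2)) + (8 * (n:ℤ) + 12)) = (-20) + (12 - 2*(n:ℤ)) by ring,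
    show (-(10 * (n:ℤ)) + (8 * (n:ℤ) + 12)) = 12 - 2*(n:ℤ) by ring,
    zpow_add₀ hne]
  ring

end Aux

set_option maxHeartbeats 1600000 in
/-- For `q > 1` (units `2m\omega = 1`), for every natural `n`,
`(1/2)(1 + q^(-20)) q^(12-2n) [4]_4 [n]^2 < h(n+2,n) < (1/2)(1 + q^(-20)) q^(12-2n) [4]_4 [n+3]^2`. -/


theorem hmat_off2_bounds (q : ℝ) (hq : 1 < q) (n : ℕ) :
    (1 / 2) * (1 + q ^ (-20 : ℤ)) * q ^ (12 - 2 * (n : ℤ)) * qbr q 4 4 * (qnum q (n : ℝ)) ^ 2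
        < hmat q (n + 2) n ∧
      hmat q (n + 2) n
        < (1 / 2) * (1 + q ^ (-20 : ℤ)) * q ^ (12 - 2 * (n : ℤ)) * qbr q 4 4
            * (qnum q ((n : ℝ) + 3)) ^ 2 := by
  have hq0 : (0:ℝ) < q := lt_trans one_pos hq
  have hne : q ≠ 0 := ne_of_gt hq0
  have hX : X4 q (n + 2) n = X4off2 q n := by
    unfold X4
    rw [if_neg (by omega), if_neg (by omega), if_neg (by omega), if_pos rfl]
  have key : hmat q (n + 2) n
      = (1/2) * (1 + q ^ (-20:ℤ)) * q ^ (12 - 2*(n:ℤ)) *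
        (Real.sqrt (qnum q ((n:ℝ)+1) * qnum q ((n:ℝ)+2)) *
          (qnum q ((n:ℝ)+3) + q ^ (-4:ℤ) * qnum q ((n:ℝ)+2)
            + q ^ (-8:ℤ) * qnum q ((n:ℝ)+1) + q ^ (-12:ℤ) * qnum q (n:ℝ))) := by
    unfold hmat
    rw [hX]
    unfold X4off2
    rw [← pow_collect hq n]
    push_cast
    ring
  rw [key, qbr44 hq]
  set a := qnum q (n:ℝ) with ha
  set b := qnum q ((n:ℝ)+1) with hb
  set c := qnum q ((n:ℝ)+2) with hc
  set e := qnum q ((n:ℝ)+3) with he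
  have ha0 : 0 ≤ a := qnum_nonneg hq (by positivity)
  have hab : a < b := qnum_mono hq (by linarith)
  have hbc : b < c := qnum_mono hq (by linarith)
  have hce : c < e := qnum_mono hq (by linarith)
  have hb0 : 0 < b := lt_of_le_of_lt ha0 hab
  have hc0 : 0 < c := lt_trans hb0 hbc
  have he0 : 0 < e := lt_trans hc0 hce
  have z4 : (0:ℝ) < q ^ (-4:ℤ) := zpow_pos hq0 _
  have z8 : (0:ℝ) < q ^ (-8:ℤ) := zpow_pos hq0 _
  have z12 : (0:ℝ) < q ^ (-12:ℤ) := zpow_pos hq0 _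
  have z20 : (0:ℝ) < q ^ (-20:ℤ) := zpow_pos hq0 _
  set S : ℝ := e + q ^ (-4:ℤ) * c + q ^ (-8:ℤ) * b + q ^ (-12:ℤ) * a with hSdef
  have hS0 : 0 < S := by
    have := mul_nonneg z4.le hc0.le
    have := mul_nonneg z8.le hb0.le
    have := mul_nonneg z12.le ha0
    rw [hSdef]; linarith
  set r : ℝ := Real.sqrt (b * c) with hrdef
  have hr0 : 0 < r := Real.sqrt_pos.2 (mul_pos hb0 hc0)
  have har : a < r := by
    rw [hrdef, show a = Real.sqrt (a^2) by rw [Real.sqrt_sq ha0]]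
    apply Real.sqrt_lt_sqrt (sq_nonneg a)
    nlinarith
  have hre : r < e := by
    rw [hrdef, show e = Real.sqrt (e^2) by rw [Real.sqrt_sq he0.le]]
    apply Real.sqrt_lt_sqrt (mul_nonneg hb0.le hc0.le)
    nlinarith
  set T : ℝ := 1 + q ^ (-4:ℤ) + q ^ (-8:ℤ) + q ^ (-12:ℤ) with hTdef
  have hP : (0:ℝ) < (1/2) * (1 + q ^ (-20:ℤ)) * q ^ (12 - 2*(n:ℤ)) := by
    have : (0:ℝ) < q ^ (12 - 2*(n:ℤ)) := zpow_pos hq0 _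
    nlinarith
  have hTa : T * a < S := by
    have h1 : q ^ (-4:ℤ) * a ≤ q ^ (-4:ℤ) * c := by nlinarith
    have h2 : q ^ (-8:ℤ) * a ≤ q ^ (-8:ℤ) * b := by nlinarith
    rw [hTdef, hSdef]; nlinarith [h1, h2]
  have hTe : S < T * e := by
    have h1 : q ^ (-4:ℤ) * c < q ^ (-4:ℤ) * e := by nlinarith
    have h2 : q ^ (-8:ℤ) * b < q ^ (-8:ℤ) * e := by nlinarith
    have h3 : q ^ (-12:ℤ) * a < q ^ (-12:ℤ) * e := by nlinarith
    rw [hTdef, hSdef]; nlinarith [h1, h2, h3]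
  have hlow : T * a ^ 2 < r * S := by
    have h1 : (T * a) * a ≤ S * a := mul_le_mul_of_nonneg_right hTa.le ha0
    have h2 : S * a < S * r := by nlinarith
    nlinarith
  have hhigh : r * S < T * e ^ 2 := by
    have h1 : r * S < e * S := by nlinarith
    have h2 : e * S < e * (T * e) := by nlinarith
    nlinarith
  constructor
  · calc (1/2) * (1 + q ^ (-20:ℤ)) * q ^ (12 - 2*(n:ℤ)) * T * a ^ 2
        = (1/2) * (1 + q ^ (-20:ℤ)) * q ^ (12 - 2*(n:ℤ)) * (T * a ^ 2) := by ring
      _ < (1/2) * (1 + q ^ (-20:ℤ)) * q ^ (12 - 2*(n:ℤ)) * (r * S) :=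
          mul_lt_mul_of_pos_left hlow hP
  · calc (1/2) * (1 + q ^ (-20:ℤ)) * q ^ (12 - 2*(n:ℤ)) * (r * S)
        < (1/2) * (1 + q ^ (-20:ℤ)) * q ^ (12 - 2*(n:ℤ)) * (T * e ^ 2) :=
          mul_lt_mul_of_pos_left hhigh hP
      _ = (1/2) * (1 + q ^ (-20:ℤ)) * q ^ (12 - 2*(n:ℤ)) * T * e ^ 2 := by ring
end

section
/- Let q > 1 and work in units 2mω = 1. For every n ∈ ℕ, q^{−2n+6} [3]_4 [2]_8 [n]² < h(n, n) < q^{−2n+6} [3]_4 [2]_8 [n+2]². -/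
section Aux

private lemma aux_Qa_pos (t : ℝ) (ht0 : 0 < t) (ht1 : t < 1) :
    0 < 2 + 5*t + 8*t^2 + 10*t^3 + 10*t^4 + 9*t^5 + 6*t^6 + 3*t^7 - 2*t^9 - 2*t^10 - t^11 := by
  have h96 : t^9 ≤ t^6 := pow_le_pow_of_le_one ht0.le ht1.le (by norm_num)
  have h106 : t^10 ≤ t^6 := pow_le_pow_of_le_one ht0.le ht1.le (by norm_num)
  have h116 : t^11 ≤ t^6 := pow_le_pow_of_le_one ht0.le ht1.le (by norm_num)
  have h2 := pow_nonneg ht0.le 2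
  have h3 := pow_nonneg ht0.le 3
  have h4 := pow_nonneg ht0.le 4
  have h5 := pow_nonneg ht0.le 5
  have h6 := pow_nonneg ht0.le 6
  have h7 := pow_nonneg ht0.le 7
  linarith [ht0.le]

private lemma aux_low (t u : ℝ) (ht0 : 0 < t) (ht1 : t < 1) (hu0 : 0 < u) (hu1 : u ≤ 1) :
    (1 - t^6)/(1 - t^2) * ((1 - t^8)/(1 - t^4)) * ((1 - u)/(1 - t))^2
      < (1 - u*t)/(1 - t) *
          ((1 - u*t^2)/(1 - t) + t^2 * ((1 - u*t)/(1 - t)) + t^4 * ((1 - u)/(1 - t)))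
        + t^4 * ((1 - u)/(1 - t)) *
          ((1 - u*t)/(1 - t) + t^2 * ((1 - u)/(1 - t)) + t^4 * ((1 - u*t⁻¹)/(1 - t))) := by
  have h1t : (0:ℝ) < 1 - t := by linarith
  have h2t : (0:ℝ) < 1 - t^2 := by nlinarith
  have h4t : (0:ℝ) < 1 - t^4 := by nlinarith
  have hne1 : (1:ℝ) - t ≠ 0 := ne_of_gt h1t
  have hne2 : (1:ℝ) - t^2 ≠ 0 := ne_of_gt h2t
  have hne4 : (1:ℝ) - t^4 ≠ 0 := ne_of_gt h4t
  have htne : t ≠ 0 := ne_of_gt ht0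
  have hQa := aux_Qa_pos t ht0 ht1
  have hQb : (0:ℝ) < 1 + 3*t + 5*t^2 + 6*t^3 + 5*t^4 + 3*t^5 + t^6 := by
    have h2 := pow_nonneg ht0.le 2
    have h3 := pow_nonneg ht0.le 3
    have h4 := pow_nonneg ht0.le 4
    have h5 := pow_nonneg ht0.le 5
    have h6 := pow_nonneg ht0.le 6
    linarith [ht0.le]
  have hnum : 0 < u * ((1-u) * ((1-t)^3 *
      (2 + 5*t + 8*t^2 + 10*t^3 + 10*t^4 + 9*t^5 + 6*t^6 + 3*t^7 - 2*t^9 - 2*t^10 - t^11))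
      + u * ((1-t)^4 * (1 + 3*t + 5*t^2 + 6*t^3 + 5*t^4 + 3*t^5 + t^6))) := by
    have hA : 0 ≤ (1-u) * ((1-t)^3 *
        (2 + 5*t + 8*t^2 + 10*t^3 + 10*t^4 + 9*t^5 + 6*t^6 + 3*t^7 - 2*t^9 - 2*t^10 - t^11)) :=
      mul_nonneg (by linarith) (mul_nonneg (by positivity) hQa.le)
    have hB : 0 < u * ((1-t)^4 * (1 + 3*t + 5*t^2 + 6*t^3 + 5*t^4 + 3*t^5 + t^6)) :=
      mul_pos hu0 (mul_pos (by positivity) hQb)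
    exact mul_pos hu0 (by linarith)
  have hD : 0 < (1 - t)^2 * ((1 - t^2) * (1 - t^4)) :=
    mul_pos (pow_pos h1t 2) (mul_pos h2t h4t)
  have hkey : ((1 - u*t)/(1 - t) *
          ((1 - u*t^2)/(1 - t) + t^2 * ((1 - u*t)/(1 - t)) + t^4 * ((1 - u)/(1 - t)))
        + t^4 * ((1 - u)/(1 - t)) *
          ((1 - u*t)/(1 - t) + t^2 * ((1 - u)/(1 - t)) + t^4 * ((1 - u*t⁻¹)/(1 - t))))
      - (1 - t^6)/(1 - t^2) * ((1 - t^8)/(1 - t^4)) * ((1 - u)/(1 - t))^2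
      = (u * ((1-u) * ((1-t)^3 *
          (2 + 5*t + 8*t^2 + 10*t^3 + 10*t^4 + 9*t^5 + 6*t^6 + 3*t^7 - 2*t^9 - 2*t^10 - t^11))
          + u * ((1-t)^4 * (1 + 3*t + 5*t^2 + 6*t^3 + 5*t^4 + 3*t^5 + t^6))))
        / ((1 - t)^2 * ((1 - t^2) * (1 - t^4))) := by
    field_simp
    ring
  have hpos := div_pos hnum hD
  rw [← hkey] at hpos
  linarith

private lemma aux_high (t u : ℝ) (ht0 : 0 < t) (ht1 : t < 1) (hu0 : 0 < u) (hu1 : u ≤ 1) :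
    (1 - u*t)/(1 - t) *
          ((1 - u*t^2)/(1 - t) + t^2 * ((1 - u*t)/(1 - t)) + t^4 * ((1 - u)/(1 - t)))
        + t^4 * ((1 - u)/(1 - t)) *
          ((1 - u*t)/(1 - t) + t^2 * ((1 - u)/(1 - t)) + t^4 * ((1 - u*t⁻¹)/(1 - t)))
      < (1 - t^6)/(1 - t^2) * ((1 - t^8)/(1 - t^4)) * ((1 - u*t^2)/(1 - t))^2 := by
  have h1t : (0:ℝ) < 1 - t := by linarith
  have h2t : (0:ℝ) < 1 - t^2 := by nlinarith
  have h4t : (0:ℝ) < 1 - t^4 := by nlinarith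
  have hne1 : (1:ℝ) - t ≠ 0 := ne_of_gt h1t
  have hne2 : (1:ℝ) - t^2 ≠ 0 := ne_of_gt h2t
  have hne4 : (1:ℝ) - t^4 ≠ 0 := ne_of_gt h4t
  have htne : t ≠ 0 := ne_of_gt ht0
  have hQc : (0:ℝ) < 1 + 2*t + 4*t^2 + 8*t^3 + 13*t^4 + 18*t^5 + 21*t^6 + 22*t^7 + 20*t^8
      + 16*t^9 + 11*t^10 + 6*t^11 + 2*t^12 := by
    have h2 := pow_nonneg ht0.le 2
    have h3 := pow_nonneg ht0.le 3
    have h4 := pow_nonneg ht0.le 4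
    have h5 := pow_nonneg ht0.le 5
    have h6 := pow_nonneg ht0.le 6
    have h7 := pow_nonneg ht0.le 7
    have h8 := pow_nonneg ht0.le 8
    have h9 := pow_nonneg ht0.le 9
    have h10 := pow_nonneg ht0.le 10
    have h11 := pow_nonneg ht0.le 11
    have h12 := pow_nonneg ht0.le 12
    linarith [ht0.le]
  have hQd : (0:ℝ) < 1 + 3*t + 6*t^2 + 11*t^3 + 17*t^4 + 22*t^5 + 24*t^6 + 23*t^7 + 20*t^8
      + 16*t^9 + 12*t^10 + 8*t^11 + 4*t^12 + t^13 := by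
    have h2 := pow_nonneg ht0.le 2
    have h3 := pow_nonneg ht0.le 3
    have h4 := pow_nonneg ht0.le 4
    have h5 := pow_nonneg ht0.le 5
    have h6 := pow_nonneg ht0.le 6
    have h7 := pow_nonneg ht0.le 7
    have h8 := pow_nonneg ht0.le 8
    have h9 := pow_nonneg ht0.le 9
    have h10 := pow_nonneg ht0.le 10
    have h11 := pow_nonneg ht0.le 11
    have h12 := pow_nonneg ht0.le 12
    have h13 := pow_nonneg ht0.le 13
    linarith [ht0.le]
  have hnum : 0 < u * ((1-u) * ((1-t)^3 * (t *
      (1 + 2*t + 4*t^2 + 8*t^3 + 13*t^4 + 18*t^5 + 21*t^6 + 22*t^7 + 20*t^8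
        + 16*t^9 + 11*t^10 + 6*t^11 + 2*t^12)))
      + u * ((1-t)^4 * (t *
      (1 + 3*t + 6*t^2 + 11*t^3 + 17*t^4 + 22*t^5 + 24*t^6 + 23*t^7 + 20*t^8
        + 16*t^9 + 12*t^10 + 8*t^11 + 4*t^12 + t^13)))) := by
    have hA : 0 ≤ (1-u) * ((1-t)^3 * (t *
        (1 + 2*t + 4*t^2 + 8*t^3 + 13*t^4 + 18*t^5 + 21*t^6 + 22*t^7 + 20*t^8
          + 16*t^9 + 11*t^10 + 6*t^11 + 2*t^12))) :=
      mul_nonneg (by linarith) (mul_nonneg (by positivity) (mul_nonneg ht0.le hQc.le))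
    have hB : 0 < u * ((1-t)^4 * (t *
        (1 + 3*t + 6*t^2 + 11*t^3 + 17*t^4 + 22*t^5 + 24*t^6 + 23*t^7 + 20*t^8
          + 16*t^9 + 12*t^10 + 8*t^11 + 4*t^12 + t^13))) :=
      mul_pos hu0 (mul_pos (by positivity) (mul_pos ht0 hQd))
    exact mul_pos hu0 (by linarith)
  have hD : 0 < (1 - t)^2 * ((1 - t^2) * (1 - t^4)) :=
    mul_pos (pow_pos h1t 2) (mul_pos h2t h4t)
  have hkey : (1 - t^6)/(1 - t^2) * ((1 - t^8)/(1 - t^4)) * ((1 - u*t^2)/(1 - t))^2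
      - ((1 - u*t)/(1 - t) *
          ((1 - u*t^2)/(1 - t) + t^2 * ((1 - u*t)/(1 - t)) + t^4 * ((1 - u)/(1 - t)))
        + t^4 * ((1 - u)/(1 - t)) *
          ((1 - u*t)/(1 - t) + t^2 * ((1 - u)/(1 - t)) + t^4 * ((1 - u*t⁻¹)/(1 - t))))
      = (u * ((1-u) * ((1-t)^3 * (t *
          (1 + 2*t + 4*t^2 + 8*t^3 + 13*t^4 + 18*t^5 + 21*t^6 + 22*t^7 + 20*t^8
            + 16*t^9 + 11*t^10 + 6*t^11 + 2*t^12)))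
          + u * ((1-t)^4 * (t *
          (1 + 3*t + 6*t^2 + 11*t^3 + 17*t^4 + 22*t^5 + 24*t^6 + 23*t^7 + 20*t^8
            + 16*t^9 + 12*t^10 + 8*t^11 + 4*t^12 + t^13)))))
        / ((1 - t)^2 * ((1 - t^2) * (1 - t^4))) := by
    field_simp
    ring
  have hpos := div_pos hnum hD
  rw [← hkey] at hpos
  linarith

end Aux

/-- For `q > 1` (units `2m\omega = 1`), for every natural `n`,
`q^(-2n+6) [3]_4 [2]_8 [n]^2 < h(n,n) < q^(-2n+6) [3]_4 [2]_8 [n+2]^2`. -/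
theorem hmat_diag_bounds (q : ℝ) (hq : 1 < q) (n : ℕ) :
    q ^ (-(2 * (n : ℤ)) + 6) * qbr q 3 4 * qbr q 2 8 * (qnum q (n : ℝ)) ^ 2
        < hmat q n n ∧
      hmat q n n
        < q ^ (-(2 * (n : ℤ)) + 6) * qbr q 3 4 * qbr q 2 8 * (qnum q ((n : ℝ) + 2)) ^ 2 := by
  have hq0 : (0:ℝ) < q := lt_trans one_pos hq
  have hq0' : q ≠ 0 := ne_of_gt hq0
  have hp : ∀ (k : ℕ) (m : ℤ), (m:ℝ) = (-2) * (k:ℝ) → q ^ m = (q ^ (-2:ℝ)) ^ k := by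
    intro k m hm
    rw [← Real.rpow_intCast q m, hm, Real.rpow_mul hq0.le, Real.rpow_natCast]
  have e4 : q ^ (-4:ℤ) = (q ^ (-2:ℝ)) ^ 2 := hp 2 (-4) (by norm_num)
  have e8 : q ^ (-8:ℤ) = (q ^ (-2:ℝ)) ^ 4 := hp 4 (-8) (by norm_num)
  have e34 : qbr q 3 4 = (1 - (q ^ (-2:ℝ))^6) / (1 - (q ^ (-2:ℝ))^2) := by
    unfold qbr
    rw [hp 6 (-(((3:ℕ):ℤ) * ((4:ℕ):ℤ))) (by push_cast; norm_num),
        hp 2 (-((4:ℕ):ℤ)) (by push_cast; norm_num)]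
  have e28 : qbr q 2 8 = (1 - (q ^ (-2:ℝ))^8) / (1 - (q ^ (-2:ℝ))^4) := by
    unfold qbr
    rw [hp 8 (-(((2:ℕ):ℤ) * ((8:ℕ):ℤ))) (by push_cast; norm_num),
        hp 4 (-((8:ℕ):ℤ)) (by push_cast; norm_num)]
  have en : qnum q (n:ℝ) = (1 - q ^ (-2*(n:ℝ))) / (1 - q ^ (-2:ℝ)) := rfl
  have en1 : qnum q ((n:ℝ)+1)
      = (1 - q ^ (-2*(n:ℝ)) * q ^ (-2:ℝ)) / (1 - q ^ (-2:ℝ)) := by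
    unfold qnum
    rw [show (-2:ℝ) * ((n:ℝ)+1) = (-2*(n:ℝ)) + (-2) by ring, Real.rpow_add hq0]
  have en2 : qnum q ((n:ℝ)+2)
      = (1 - q ^ (-2*(n:ℝ)) * (q ^ (-2:ℝ))^2) / (1 - q ^ (-2:ℝ)) := by
    unfold qnum
    rw [show (-2:ℝ) * ((n:ℝ)+2) = (-2*(n:ℝ)) + ((-2) + (-2)) by ring, Real.rpow_add hq0,
        Real.rpow_add hq0]
    ring
  have enm1 : qnum q ((n:ℝ)-1)
      = (1 - q ^ (-2*(n:ℝ)) * (q ^ (-2:ℝ))⁻¹) / (1 - q ^ (-2:ℝ)) := by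
    unfold qnum
    rw [show (-2:ℝ) * ((n:ℝ)-1) = (-2*(n:ℝ)) + -(-2:ℝ) by ring, Real.rpow_add hq0,
        Real.rpow_neg hq0.le]
  have ht0 : 0 < q ^ (-2:ℝ) := Real.rpow_pos_of_pos hq0 _
  have ht1 : q ^ (-2:ℝ) < 1 := Real.rpow_lt_one_of_one_lt_of_neg hq (by norm_num)
  have hu0 : 0 < q ^ (-2*(n:ℝ)) := Real.rpow_pos_of_pos hq0 _
  have hu1 : q ^ (-2*(n:ℝ)) ≤ 1 := by
    apply Real.rpow_le_one_of_one_le_of_nonpos hq.le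
    have : (0:ℝ) ≤ (n:ℝ) := Nat.cast_nonneg n
    linarith
  have hx : q ^ (-(10 * (n:ℤ))) * q ^ (8*n+6) = q ^ (-(2*(n:ℤ)) + 6) := by
    rw [← zpow_natCast q (8*n+6), ← zpow_add₀ hq0']
    congr 1
    push_cast
    ring
  have hh : hmat q n n = q ^ (-(2*(n:ℤ)) + 6) *
      (qnum q ((n:ℝ)+1) * (qnum q ((n:ℝ)+2) + q ^ (-4:ℤ) * qnum q ((n:ℝ)+1)
          + q ^ (-8:ℤ) * qnum q (n:ℝ))
        + q ^ (-8:ℤ) * qnum q (n:ℝ) * (qnum q ((n:ℝ)+1) + q ^ (-4:ℤ) * qnum q (n:ℝ)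
          + q ^ (-8:ℤ) * qnum q ((n:ℝ)-1))) := by
    unfold hmat X4 X4diag
    rw [if_pos rfl, ← hx]
    ring
  have epos : 0 < q ^ (-(2*(n:ℤ)) + 6) := zpow_pos hq0 _
  constructor
  · calc q ^ (-(2 * (n : ℤ)) + 6) * qbr q 3 4 * qbr q 2 8 * (qnum q (n : ℝ)) ^ 2
        = q ^ (-(2*(n:ℤ)) + 6) * (qbr q 3 4 * qbr q 2 8 * (qnum q (n:ℝ))^2) := by ring
      _ < q ^ (-(2*(n:ℤ)) + 6) *
          (qnum q ((n:ℝ)+1) * (qnum q ((n:ℝ)+2) + q ^ (-4:ℤ) * qnum q ((n:ℝ)+1)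
              + q ^ (-8:ℤ) * qnum q (n:ℝ))
            + q ^ (-8:ℤ) * qnum q (n:ℝ) * (qnum q ((n:ℝ)+1) + q ^ (-4:ℤ) * qnum q (n:ℝ)
              + q ^ (-8:ℤ) * qnum q ((n:ℝ)-1))) := by
          rw [e34, e28, en, en1, en2, enm1, e4, e8]
          exact mul_lt_mul_of_pos_left
            (aux_low (q ^ (-2:ℝ)) (q ^ (-2*(n:ℝ))) ht0 ht1 hu0 hu1) epos
      _ = hmat q n n := hh.symm
  · calc hmat q n n
        = q ^ (-(2*(n:ℤ)) + 6) *
          (qnum q ((n:ℝ)+1) * (qnum q ((n:ℝ)+2) + q ^ (-4:ℤ) * qnum q ((n:ℝ)+1)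
              + q ^ (-8:ℤ) * qnum q (n:ℝ))
            + q ^ (-8:ℤ) * qnum q (n:ℝ) * (qnum q ((n:ℝ)+1) + q ^ (-4:ℤ) * qnum q (n:ℝ)
              + q ^ (-8:ℤ) * qnum q ((n:ℝ)-1))) := hh
      _ < q ^ (-(2*(n:ℤ)) + 6) * (qbr q 3 4 * qbr q 2 8 * (qnum q ((n:ℝ)+2))^2) := by
          rw [e34, e28, en, en1, en2, enm1, e4, e8]
          exact mul_lt_mul_of_pos_left
            (aux_high (q ^ (-2:ℝ)) (q ^ (-2*(n:ℝ))) ht0 ht1 hu0 hu1) epos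
      _ = q ^ (-(2 * (n : ℤ)) + 6) * qbr q 3 4 * qbr q 2 8 * (qnum q ((n : ℝ) + 2)) ^ 2 := by
          ring
end

section
/- For every real q with 1 ≤ q < 1.06, one has 1 < 2 [3]_4 [2]_8 / (q^{12} [4]_4 (1 + q^{−20})). -/
noncomputable section

/-- The q-bracket `[k]_i = (1 - q^(-k i))/(1 - q^(-i))` for `q > 1`, interpreted as its
limit value `k` at `q = 1`. -/
def qbr1 (q : ℝ) (k i : ℕ) : ℝ :=
  if q = 1 then (k : ℝ) else (1 - q ^ (-((k : ℤ) * i))) / (1 - q ^ (-(i : ℤ)))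

end

lemma key_poly (t : ℝ) (h1 : 0.79 < t) (h2 : t < 1) :
    (1+t+t^2+t^3)*(1+t^5) < 2*t^3*(1+t+t^2)*(1+t^2) := by
  nlinarith [mul_pos (sub_pos.2 h1) (sub_pos.2 h2), sq_nonneg (t-1), sq_nonneg (t^2-1),
    mul_pos (mul_pos (sub_pos.2 h1) (sub_pos.2 h2)) (mul_pos (sub_pos.2 h1) (sub_pos.2 h2)),
    sq_nonneg (t^3 - t), pow_pos (show (0:ℝ) < t by linarith) 3,
    pow_pos (show (0:ℝ) < t by linarith) 5]

/-- For every real `q` with `1 <= q < 1.06`,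
`1 < 2 [3]_4 [2]_8 / (q^12 [4]_4 (1 + q^(-20)))`. -/
theorem one_lt_ratio_off2 (q : ℝ) (hq1 : 1 ≤ q) (hq2 : q < 1.06) :
    1 < 2 * qbr1 q 3 4 * qbr1 q 2 8 / (q ^ 12 * qbr1 q 4 4 * (1 + q ^ (-20 : ℤ))) := by
  rcases eq_or_lt_of_le hq1 with h | h
  · subst h
    simp [qbr1]
    norm_num
  · have hq0 : (0:ℝ) < q := by linarith
    have hqne : q ≠ 1 := ne_of_gt h
    set t : ℝ := (q ^ 4)⁻¹ with ht
    have ht0 : 0 < t := by positivity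
    have ht1 : t < 1 := by
      rw [ht, inv_lt_one_iff₀]
      right; exact one_lt_pow₀ (by linarith) (by norm_num)
    have ht79 : 0.79 < t := by
      rw [ht, lt_inv_comm₀ (by norm_num) (by positivity)]
      calc q ^ 4 < 1.06 ^ 4 := by
            exact pow_lt_pow_left₀ hq2 (by linarith) (by norm_num)
        _ < (0.79:ℝ)⁻¹ := by norm_num
    have e4 : (q ^ (4:ℤ))⁻¹ = t := by rw [ht]; norm_cast
    have e8 : (q ^ (8:ℤ))⁻¹ = t ^ 2 := by rw [ht, inv_pow, ← pow_mul]; norm_cast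
    have e12 : (q ^ (12:ℤ))⁻¹ = t ^ 3 := by rw [ht, inv_pow, ← pow_mul]; norm_cast
    have e16 : (q ^ (16:ℤ))⁻¹ = t ^ 4 := by rw [ht, inv_pow, ← pow_mul]; norm_cast
    have e20 : (q ^ (20:ℤ))⁻¹ = t ^ 5 := by rw [ht, inv_pow, ← pow_mul]; norm_cast
    have eq12 : q ^ 12 = (t ^ 3)⁻¹ := by
      rw [ht, ← inv_pow, inv_inv, ← pow_mul]
    have h1t : (0:ℝ) < 1 - t := by linarith
    have h1t2 : (0:ℝ) < 1 - t ^ 2 := by nlinarith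
    have h1t3 : (0:ℝ) < 1 - t ^ 3 := by nlinarith
    have h1t4 : (0:ℝ) < 1 - t ^ 4 := by nlinarith
    have h1t5 : (0:ℝ) < 1 + t ^ 5 := by positivity
    clear_value t
    simp only [qbr1, if_neg hqne]
    norm_num
    have n4 : (q ^ 4)⁻¹ = t := ht.symm
    have n8 : (q ^ 8)⁻¹ = t ^ 2 := by rw [ht, inv_pow, ← pow_mul]
    have n16 : (q ^ 16)⁻¹ = t ^ 4 := by rw [ht, inv_pow, ← pow_mul]
    have n20 : (q ^ 20)⁻¹ = t ^ 5 := by rw [ht, inv_pow, ← pow_mul]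
    simp only [e4, e8, e12, e16, e20, eq12, n4, n8, n16, n20, inv_inv]
    rw [one_lt_div (mul_pos (mul_pos (by positivity) (div_pos h1t4 h1t)) h1t5)]
    have hA : (1 - t ^ 3) / (1 - t) = 1 + t + t ^ 2 := by
      field_simp; ring
    have hB : (1 - t ^ 4) / (1 - t) = 1 + t + t ^ 2 + t ^ 3 := by
      field_simp; ring
    have hC : (1 - t ^ 4) / (1 - t ^ 2) = 1 + t ^ 2 := by
      field_simp; ring
    rw [hA, hB, hC, show (t^3)⁻¹ * (1+t+t^2+t^3) * (1+t^5)
        = ((1+t+t^2+t^3) * (1+t^5)) / t^3 by ring,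
      div_lt_iff₀ (by positivity)]
    nlinarith [key_poly t ht79 ht1]
end

section
/- Let q > 1 and ω > 0, and define the unperturbed energy levels E_k^{(0)} := ω [k] for k ∈ ℕ. For all n, m ∈ ℕ and any integer i ≥ 1 with |m − n| ≥ i, one has |E_n^{(0)} − E_m^{(0)}| ≥ [i] q^{−2n} ω. -/
/-- For `q > 1`, `\omega > 0`, with unperturbed energies `E_k = \omega [k]`:
for all naturals `n, m` and any integer `i >= 1` with `|m - n| >= i`, one has
`|E_n - E_m| >= [i] q^(-2n) \omega`. -/
theorem energy_gap (q ω : ℝ) (hq : 1 < q) (hω : 0 < ω) (n m : ℕ) (i : ℤ)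
    (hi : 1 ≤ i) (hmn : i ≤ |(m : ℤ) - (n : ℤ)|) :
    qnum q (i : ℝ) * q ^ (-(2 * (n : ℤ))) * ω ≤ |ω * qnum q (n : ℝ) - ω * qnum q (m : ℝ)| := by
  have hq0 : (0 : ℝ) < q := lt_trans one_pos hq
  have hc : q ^ (-2 : ℝ) < 1 := Real.rpow_lt_one_of_one_lt_of_neg hq (by norm_num)
  have hd : 0 < 1 - q ^ (-2 : ℝ) := by linarith
  set a := q ^ (-2 * (n : ℝ)) with ha
  set b := q ^ (-2 * (m : ℝ)) with hb
  set c := q ^ (-2 * (i : ℝ)) with hcdef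
  have hapos : 0 < a := Real.rpow_pos_of_pos hq0 _
  have hbpos : 0 < b := Real.rpow_pos_of_pos hq0 _
  have hcpos : 0 < c := Real.rpow_pos_of_pos hq0 _
  have hc1 : c < 1 := by
    apply Real.rpow_lt_one_of_one_lt_of_neg hq
    have : (1 : ℝ) ≤ (i : ℝ) := by exact_mod_cast hi
    linarith
  have hz : q ^ (-(2 * (n : ℤ))) = a := by
    rw [ha, ← Real.rpow_intCast q (-(2 * (n : ℤ)))]
    push_cast
    ring_nf
  have key : (1 - c) * a ≤ |b - a| := by
    have hcases : (n : ℤ) + i ≤ (m : ℤ) ∨ (m : ℤ) + i ≤ (n : ℤ) := by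
      rcases le_or_gt 0 ((m : ℤ) - (n : ℤ)) with h0 | h0
      · rw [abs_of_nonneg h0] at hmn; omega
      · rw [abs_of_neg h0] at hmn; omega
    rcases hcases with hcase | hcase
    · have hle : b ≤ a * c := by
        rw [ha, hcdef, ← Real.rpow_add hq0]
        apply (Real.rpow_le_rpow_left_iff hq).mpr
        have : (n : ℝ) + (i : ℝ) ≤ (m : ℝ) := by exact_mod_cast hcase
        linarith
      calc (1 - c) * a ≤ -(b - a) := by nlinarith
        _ ≤ |b - a| := neg_le_abs _
    · have hle : a ≤ b * c := by
        rw [hb, hcdef, ← Real.rpow_add hq0]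
        apply (Real.rpow_le_rpow_left_iff hq).mpr
        have : (m : ℝ) + (i : ℝ) ≤ (n : ℝ) := by exact_mod_cast hcase
        linarith
      have hab : a ≤ b := by
        rw [ha, hb]
        apply (Real.rpow_le_rpow_left_iff hq).mpr
        have : (m : ℝ) ≤ (n : ℝ) := by exact_mod_cast (by omega : (m : ℤ) ≤ (n : ℤ))
        linarith
      calc (1 - c) * a ≤ b - a := by nlinarith
        _ ≤ |b - a| := le_abs_self _
  rw [hz]
  have hE : ω * qnum q (n : ℝ) - ω * qnum q (m : ℝ) = ω * ((b - a) / (1 - q ^ (-2:ℝ))) := by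
    simp only [qnum, ← ha, ← hb]
    field_simp
    ring
  rw [hE, abs_mul, abs_of_pos hω, abs_div, abs_of_pos hd]
  have hqi : qnum q (i : ℝ) = (1 - c) / (1 - q ^ (-2:ℝ)) := by simp [qnum, hcdef]
  rw [hqi]
  have h1 : (1 - c) / (1 - q ^ (-2:ℝ)) * a * ω = ((1 - c) * a * ω) / (1 - q ^ (-2:ℝ)) := by
    ring
  have h2 : ω * (|b - a| / (1 - q ^ (-2:ℝ))) = (|b - a| * ω) / (1 - q ^ (-2:ℝ)) := by ring
  rw [h1, h2]
  gcongr
end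

section
/- Let 1 < q < 1.06, ω > 0, work in units 2mω = 1, and fix n ∈ ℕ with (1 + q^{−2}) q^{−2n} > 1. Set γ(q) := ω ((1 + q^{−2}) q^{−2n} − 1) / (5 C(q)). Then the function G(Δ, γ) := Σ_{k=1}^{∞} E_n^{(k)}(Δ, γ) − Δ is analytic (as a function of two complex variables) on the polydisc {(Δ, γ) ∈ ℂ × ℂ : |Δ| < ω/5, |γ| < γ(q)}. -/
noncomputable section

namespace St10

variable {q : ℝ}

noncomputable def uu (q : ℝ) : ℝ := (q ^ 2)⁻¹

lemma uu_pos (hq : 1 < q) : 0 < uu q := by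
  have : (0:ℝ) < q ^ 2 := by positivity
  simpa [uu] using inv_pos.2 this

lemma uu_lt_one (hq : 1 < q) : uu q < 1 := by
  have h : (1:ℝ) < q ^ 2 := by nlinarith
  simpa [uu] using inv_lt_one_of_one_lt₀ h

lemma uu_gt (hq : 1 < q) (hq2 : q < 1.06) : 0.88 < uu q := by
  have h : q ^ 2 < 1.1236 := by nlinarith
  have h0 : (0:ℝ) < q ^ 2 := by positivity
  have : (1:ℝ)/1.1236 < (q^2)⁻¹ := by
    rw [div_lt_iff₀ (by norm_num)]
    rw [inv_mul_eq_div, lt_div_iff₀ h0]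
    nlinarith
  unfold uu; nlinarith

lemma rpow_eq (hq : 1 < q) (x : ℝ) : q ^ (-2 * x) = (uu q) ^ x := by
  have hq0 : (0:ℝ) < q := lt_trans one_pos hq
  have h1 : q ^ (-2 * x) = (q ^ (-2 : ℝ)) ^ x := by
    rw [← Real.rpow_mul (le_of_lt hq0)]
  rw [h1]
  congr 1
  rw [Real.rpow_neg (le_of_lt hq0), uu,
    show (2:ℝ) = ((2:ℕ):ℝ) by norm_num, Real.rpow_natCast]

lemma uu_rpow_nat (hq : 1 < q) (j : ℕ) : (uu q) ^ (j : ℝ) = (uu q) ^ j :=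
  Real.rpow_natCast _ j

/-- `qnum` at a natural argument. -/
lemma qnum_nat (hq : 1 < q) (j : ℕ) :
    qnum q (j : ℝ) = (1 - uu q ^ j) / (1 - uu q) := by
  unfold qnum
  rw [rpow_eq hq, uu_rpow_nat hq, show (-2:ℝ) = -2 * 1 by ring, rpow_eq hq,
    Real.rpow_one]

lemma qnumN_eq (hq : 1 < q) (j : ℕ) :
    qnumN q j = (1 - uu q ^ j) / (1 - uu q) := qnum_nat hq j

lemma one_sub_uu_pos (hq : 1 < q) : 0 < 1 - uu q := by linarith [uu_lt_one hq]

lemma qnumN_nonneg (hq : 1 < q) (j : ℕ) : 0 ≤ qnumN q j := by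
  rw [qnumN_eq hq]
  have h1 : uu q ^ j ≤ 1 := pow_le_one₀ (le_of_lt (uu_pos hq)) (le_of_lt (uu_lt_one hq))
  have h2 := one_sub_uu_pos hq
  exact div_nonneg (by linarith) (by linarith)

lemma qnumN_mono (hq : 1 < q) {a b : ℕ} (h : a ≤ b) : qnumN q a ≤ qnumN q b := by
  rw [qnumN_eq hq, qnumN_eq hq]
  have := one_sub_uu_pos hq
  have h2 : uu q ^ b ≤ uu q ^ a :=
    pow_le_pow_of_le_one (le_of_lt (uu_pos hq)) (le_of_lt (uu_lt_one hq)) h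
  gcongr

end St10

namespace St10a
open St10

variable {q : ℝ}

/-- the key optimization `t(1-t)² ≤ 4/27`. -/
lemma key_opt {t : ℝ} (h0 : 0 ≤ t) (h1 : t ≤ 1) : t * (1 - t) ^ 2 ≤ 4 / 27 := by
  nlinarith [sq_nonneg (1 - 3 * t), sq_nonneg t]

lemma q_ne_zero (hq : 1 < q) : q ≠ 0 := by positivity

lemma uu_ne_zero (hq : 1 < q) : uu q ≠ 0 := ne_of_gt (uu_pos hq)

lemma zpow_uu (hq : 1 < q) (a : ℕ) : q ^ (-(2 * a : ℤ)) = uu q ^ a := by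
  have hq0 : q ≠ 0 := q_ne_zero hq
  rw [zpow_neg, show ((2 * a : ℤ)) = ((2 * a : ℕ) : ℤ) by push_cast; ring,
    zpow_natCast, pow_mul, uu, inv_pow]

lemma z2 (hq : 1 < q) : q ^ (-2 : ℤ) = uu q := by
  simpa using zpow_uu hq 1

lemma z4 (hq : 1 < q) : q ^ (-4 : ℤ) = uu q ^ 2 := by
  simpa using zpow_uu hq 2

lemma z8 (hq : 1 < q) : q ^ (-8 : ℤ) = uu q ^ 4 := by
  simpa using zpow_uu hq 4

lemma z12 (hq : 1 < q) : q ^ (-12 : ℤ) = uu q ^ 6 := by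
  simpa using zpow_uu hq 6

lemma z10 (hq : 1 < q) (m : ℕ) : q ^ (-(10 * (m : ℤ))) = uu q ^ (5 * m) := by
  have := zpow_uu hq (5 * m)
  rw [show (-(2 * (5 * m : ℕ) : ℤ)) = -(10 * (m : ℤ)) by push_cast; ring] at this
  exact this

lemma npow_uu (hq : 1 < q) (a : ℕ) : q ^ (2 * a) = (uu q ^ a)⁻¹ := by
  rw [pow_mul, uu, inv_pow, inv_inv]

lemma qnum_cast (hq : 1 < q) (n c : ℕ) :
    qnum q ((n : ℝ) + c) = (1 - uu q ^ (n + c)) / (1 - uu q) := by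
  rw [show ((n : ℝ) + c) = ((n + c : ℕ) : ℝ) by push_cast; ring, qnum_nat hq]

lemma qnum_cast0 (hq : 1 < q) (n : ℕ) :
    qnum q (n : ℝ) = (1 - uu q ^ n) / (1 - uu q) := qnum_nat hq n

lemma qnum_nonneg_nat (hq : 1 < q) (n : ℕ) : 0 ≤ qnum q (n : ℝ) :=
  qnumN_nonneg hq n

/-- `Cq` in terms of `u`. -/
lemma Cq_eq (hq : 1 < q) :
    Cq q = 4 * ((1 + uu q ^ 2 + uu q ^ 4) * (1 + uu q ^ 4)) /
      (27 * uu q ^ 5 * (1 - uu q) ^ 2) := by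
  have hu0 := uu_pos hq
  have hu1 := uu_lt_one hq
  have h1 : qbr q 3 4 = 1 + uu q ^ 2 + uu q ^ 4 := by
    rw [qbr, show (-(((3:ℕ) : ℤ) * (4:ℕ)) : ℤ) = -12 by norm_num, z12 hq,
      show (-((4:ℕ) : ℤ) : ℤ) = -4 by norm_num, z4 hq]
    have h2 : 1 - uu q ^ 2 ≠ 0 := by nlinarith
    field_simp
    ring
  have h2 : qbr q 2 8 = 1 + uu q ^ 4 := by
    rw [qbr, show (-(((2:ℕ) : ℤ) * (8:ℕ)) : ℤ) = -(2 * (8:ℕ)) by norm_num, zpow_uu hq,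
      show (-((8:ℕ) : ℤ) : ℤ) = -8 by norm_num, z8 hq]
    have h2 : 1 - uu q ^ 4 ≠ 0 := by nlinarith [pow_lt_one₀ (le_of_lt hu0) hu1 (by norm_num : (4:ℕ) ≠ 0)]
    field_simp
    ring
  have h3 : (q : ℝ) ^ 10 = (uu q ^ 5)⁻¹ := npow_uu hq 5
  rw [Cq, h1, h2, h3, z2 hq]
  have h4 : uu q ^ 5 ≠ 0 := pow_ne_zero _ (uu_ne_zero hq)
  have h5 : (1 - uu q) ≠ 0 := ne_of_gt (one_sub_uu_pos hq)
  field_simp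

lemma Cq_pos (hq : 1 < q) : 0 < Cq q := by
  have hu0 := uu_pos hq
  have hu1 := uu_lt_one hq
  rw [Cq_eq hq]
  have h5 : (0:ℝ) < 1 - uu q := one_sub_uu_pos hq
  positivity

end St10a

namespace St10a
open St10

variable {q : ℝ}

section entry
variable (hq : 1 < q) (hq2 : q < 1.06)

-- numeric helpers for `u ∈ (0.88, 1)`
lemma upows (hq : 1 < q) (hq2 : q < 1.06) :
    0.77 ≤ uu q ^ 2 ∧ 0.59 ≤ uu q ^ 4 ∧ 0.46 ≤ uu q ^ 6 ∧ 0.34 ≤ uu q ^ 8 := by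
  have h := uu_gt hq hq2
  have h0 := uu_pos hq
  have h2 : 0.77 ≤ uu q ^ 2 := by nlinarith
  have h4 : 0.59 ≤ uu q ^ 4 := by nlinarith
  have h6 : 0.46 ≤ uu q ^ 6 := by nlinarith
  have h8 : 0.34 ≤ uu q ^ 8 := by nlinarith
  exact ⟨h2, h4, h6, h8⟩

lemma J2 (hq : 1 < q) (hq2 : q < 1.06) :
    (1 + uu q ^ 10) * (1 + uu q ^ 2 + uu q ^ 4 + uu q ^ 6)
      ≤ 2 * uu q ^ 4 * ((1 + uu q ^ 2 + uu q ^ 4) * (1 + uu q ^ 4)) := by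
  obtain ⟨h2, h4, h6, h8⟩ := upows hq hq2
  have h0 := uu_pos hq
  have h1 := uu_lt_one hq
  set u := uu q with hu
  have e2 : u ^ 2 ≤ 1 := pow_le_one₀ h0.le h1.le
  have e4 : u ^ 4 ≤ 1 := pow_le_one₀ h0.le h1.le
  have e6 : u ^ 6 ≤ 1 := pow_le_one₀ h0.le h1.le
  have e8 : u ^ 8 ≤ 1 := pow_le_one₀ h0.le h1.le
  have e10 : u ^ 10 ≤ u ^ 8 := pow_le_pow_of_le_one h0.le h1.le (by norm_num)
  have e14 : u ^ 14 ≤ u ^ 12 := pow_le_pow_of_le_one h0.le h1.le (by norm_num)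
  have e16 : u ^ 16 ≤ u ^ 12 := pow_le_pow_of_le_one h0.le h1.le (by norm_num)
  nlinarith [mul_nonneg (pow_nonneg h0.le 8) (sub_nonneg.2 e2),
    mul_nonneg (pow_nonneg h0.le 8) (sub_nonneg.2 e4),
    sq_nonneg (1 - u ^ 2), mul_le_one₀ e2 (pow_nonneg h0.le 4) e4]

lemma J4 (hq : 1 < q) (hq2 : q < 1.06) :
    1 + uu q ^ 20 ≤ 2 * uu q ^ 6 * ((1 + uu q ^ 2 + uu q ^ 4) * (1 + uu q ^ 4)) := by
  obtain ⟨h2, h4, h6, h8⟩ := upows hq hq2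
  have h0 := uu_pos hq
  have h1 := uu_lt_one hq
  set u := uu q with hu
  have e20 : u ^ 20 ≤ 1 := pow_le_one₀ h0.le h1.le
  nlinarith [pow_nonneg h0.le 2, pow_nonneg h0.le 4]

end entry
end St10a

namespace St10a
open St10

variable {q : ℝ}

lemma qnum0 (hq : 1 < q) (n : ℕ) : qnum q (n:ℝ) = (1 - uu q ^ n) / (1 - uu q) :=
  qnum_nat hq n

lemma qnum1 (hq : 1 < q) (n : ℕ) :
    qnum q ((n:ℝ) + 1) = (1 - uu q ^ (n+1)) / (1 - uu q) := by
  rw [show ((n:ℝ) + 1) = ((n+1:ℕ):ℝ) by push_cast; ring, qnum_nat hq]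

lemma qnum2 (hq : 1 < q) (n : ℕ) :
    qnum q ((n:ℝ) + 2) = (1 - uu q ^ (n+2)) / (1 - uu q) := by
  rw [show ((n:ℝ) + 2) = ((n+2:ℕ):ℝ) by push_cast; ring, qnum_nat hq]

lemma qnum3 (hq : 1 < q) (n : ℕ) :
    qnum q ((n:ℝ) + 3) = (1 - uu q ^ (n+3)) / (1 - uu q) := by
  rw [show ((n:ℝ) + 3) = ((n+3:ℕ):ℝ) by push_cast; ring, qnum_nat hq]

lemma qnum4 (hq : 1 < q) (n : ℕ) :
    qnum q ((n:ℝ) + 4) = (1 - uu q ^ (n+4)) / (1 - uu q) := by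
  rw [show ((n:ℝ) + 4) = ((n+4:ℕ):ℝ) by push_cast; ring, qnum_nat hq]

lemma qnum_zero (hq : 1 < q) : qnum q ((0:ℕ):ℝ) = 0 := by
  norm_num [qnum]

/-- generic bound `0 ≤ (1-u^j)/(1-u) ≤ (1-u^k)/(1-u)` for `j ≤ k`. -/
lemma Bnn (hq : 1 < q) (j : ℕ) : 0 ≤ (1 - uu q ^ j) / (1 - uu q) := by
  rw [← qnumN_eq hq]; exact qnumN_nonneg hq j

lemma Bmono (hq : 1 < q) {j k : ℕ} (h : j ≤ k) :
    (1 - uu q ^ j) / (1 - uu q) ≤ (1 - uu q ^ k) / (1 - uu q) := by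
  rw [← qnumN_eq hq, ← qnumN_eq hq]; exact qnumN_mono hq h

/-- Nonnegativity of the matrix entries. -/
lemma X4diag_nonneg (hq : 1 < q) (n : ℕ) : 0 ≤ X4diag q n := by
  have h0 := uu_pos hq
  have hq0 : (0:ℝ) < q := lt_trans one_pos hq
  rw [X4diag, z4 hq, z8 hq, qnum1 hq, qnum2 hq, qnum0 hq]
  have b0 := Bnn hq n
  have b1 := Bnn hq (n+1)
  have b2 := Bnn hq (n+2)
  have hT1 : 0 ≤ (1 - uu q ^ (n+1)) / (1 - uu q) *
      ((1 - uu q ^ (n+2)) / (1 - uu q) + uu q ^ 2 * ((1 - uu q ^ (n+1)) / (1 - uu q))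
        + uu q ^ 4 * ((1 - uu q ^ n) / (1 - uu q))) := by positivity
  have hT2 : 0 ≤ uu q ^ 4 * ((1 - uu q ^ n) / (1 - uu q)) *
      ((1 - uu q ^ (n+1)) / (1 - uu q) + uu q ^ 2 * ((1 - uu q ^ n) / (1 - uu q))
        + uu q ^ 4 * qnum q ((n:ℝ) - 1)) := by
    rcases n with _ | m
    · norm_num
    · have bm : qnum q (((m+1:ℕ):ℝ) - 1) = (1 - uu q ^ m) / (1 - uu q) := by
        rw [show (((m+1:ℕ):ℝ) - 1) = ((m:ℕ):ℝ) by push_cast; ring, qnum_nat hq]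
      rw [bm]
      have := Bnn hq m
      positivity
  exact mul_nonneg (by positivity) (add_nonneg hT1 hT2)

lemma X4off2_nonneg (hq : 1 < q) (n : ℕ) : 0 ≤ X4off2 q n := by
  have h0 := uu_pos hq
  have hq0 : (0:ℝ) < q := lt_trans one_pos hq
  rw [X4off2, z4 hq, z8 hq, z12 hq, qnum1 hq, qnum2 hq, qnum3 hq, qnum0 hq]
  have b0 := Bnn hq n
  have b1 := Bnn hq (n+1)
  have b2 := Bnn hq (n+2)
  have b3 := Bnn hq (n+3)
  have hs : 0 ≤ Real.sqrt ((1 - uu q ^ (n+1)) / (1 - uu q) * ((1 - uu q ^ (n+2)) / (1 - uu q))) :=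
    Real.sqrt_nonneg _
  positivity

lemma X4off4_nonneg (hq : 1 < q) (n : ℕ) : 0 ≤ X4off4 q n := by
  have hq0 : (0:ℝ) < q := lt_trans one_pos hq
  rw [X4off4]
  positivity

lemma hmat_nonneg (hq : 1 < q) (a b : ℕ) : 0 ≤ hmat q a b := by
  have hq0 : (0:ℝ) < q := lt_trans one_pos hq
  have hco : 0 ≤ (1/2 : ℝ) * (q ^ (-(10 * (a:ℤ))) + q ^ (-(10 * (b:ℤ)))) := by positivity
  rw [hmat, X4]
  split_ifs with h1 h2 h3 h4 h5
  · exact mul_nonneg hco (X4diag_nonneg hq b)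
  · exact mul_nonneg hco (X4off4_nonneg hq b)
  · exact mul_nonneg hco (X4off4_nonneg hq a)
  · exact mul_nonneg hco (X4off2_nonneg hq b)
  · exact mul_nonneg hco (X4off2_nonneg hq a)
  · simp

end St10a

namespace St10a
open St10

variable {q : ℝ}

lemma hmat_diag_le (hq : 1 < q) (hq2 : q < 1.06) (n : ℕ) : hmat q n n ≤ Cq q := by
  have hu0 := uu_pos hq
  have hu1 := uu_lt_one hq
  have h1u := one_sub_uu_pos hq
  have hune := uu_ne_zero hq
  have h1une : (1 - uu q) ≠ 0 := ne_of_gt h1u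
  set u := uu q with hu
  have hX : X4diag q n ≤ (u ^ (4*n+3))⁻¹ *
      ((1 + u^2 + u^4) * ((1 + u^4) * ((1 - u^(n+2))/(1-u))^2)) := by
    rw [X4diag, z4 hq, z8 hq, qnum1 hq, qnum2 hq, qnum0 hq,
      show 8*n+6 = 2*(4*n+3) by ring, npow_uu hq]
    have hinner : (1 - u^(n+1))/(1-u) *
          ((1 - u^(n+2))/(1-u) + u^2 * ((1 - u^(n+1))/(1-u)) + u^4 * ((1 - u^n)/(1-u)))
        + u^4 * ((1 - u^n)/(1-u)) *
          ((1 - u^(n+1))/(1-u) + u^2 * ((1 - u^n)/(1-u)) + u^4 * qnum q ((n:ℝ) - 1))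
        ≤ (1 + u^2 + u^4) * ((1 + u^4) * ((1 - u^(n+2))/(1-u))^2) := by
      set B2 := (1 - u^(n+2))/(1-u) with hB2
      have hb2 := Bnn hq (n+2)
      have m0 : (1 - u^n)/(1-u) ≤ B2 := Bmono hq (by omega)
      have m1 : (1 - u^(n+1))/(1-u) ≤ B2 := Bmono hq (by omega)
      have n0 := Bnn hq n
      have n1 := Bnn hq (n+1)
      have hT1 : (1 - u^(n+1))/(1-u) *
          ((1 - u^(n+2))/(1-u) + u^2 * ((1 - u^(n+1))/(1-u)) + u^4 * ((1 - u^n)/(1-u)))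
          ≤ B2 * (B2 + u^2 * B2 + u^4 * B2) := by
        apply mul_le_mul m1 _ (by positivity) hb2
        gcongr <;> first | exact m1 | exact m0 | positivity
      have hT2 : u^4 * ((1 - u^n)/(1-u)) *
          ((1 - u^(n+1))/(1-u) + u^2 * ((1 - u^n)/(1-u)) + u^4 * qnum q ((n:ℝ) - 1))
          ≤ u^4 * (B2 * (B2 + u^2 * B2 + u^4 * B2)) := by
        rcases n with _ | m
        · simp only [pow_zero, sub_self, zero_div, mul_zero, zero_mul]
          have h5 : 0 ≤ B2 * (B2 + u^2 * B2 + u^4 * B2) := by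
            nlinarith [mul_nonneg hb2 hb2, pow_nonneg hu0.le 2, pow_nonneg hu0.le 4,
              mul_nonneg (mul_nonneg hb2 hb2) (pow_nonneg hu0.le 2),
              mul_nonneg (mul_nonneg hb2 hb2) (pow_nonneg hu0.le 4)]
          positivity
        · have bm : qnum q (((m+1:ℕ):ℝ) - 1) = (1 - u ^ m) / (1 - u) := by
            rw [show (((m+1:ℕ):ℝ) - 1) = ((m:ℕ):ℝ) by push_cast; ring, qnum_nat hq]
          push_cast at bm ⊢
          rw [bm]
          have mm : (1 - u^m)/(1-u) ≤ B2 := Bmono hq (by omega)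
          have nm := Bnn hq m
          rw [mul_assoc]
          apply mul_le_mul_of_nonneg_left _ (by positivity : (0:ℝ) ≤ u ^ 4)
          apply mul_le_mul m0 _ (by positivity) hb2
          gcongr <;> first | exact m1 | exact m0 | exact mm | positivity
      calc _ ≤ B2 * (B2 + u^2 * B2 + u^4 * B2) + u^4 * (B2 * (B2 + u^2 * B2 + u^4 * B2)) :=
            add_le_add hT1 hT2
        _ = (1 + u^2 + u^4) * ((1 + u^4) * B2^2) := by ring
    exact mul_le_mul_of_nonneg_left hinner (by positivity)
  rw [hmat, X4, if_pos rfl, z10 hq]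
  calc (1/2) * (u ^ (5*n) + u ^ (5*n)) * X4diag q n
      ≤ (1/2) * (u ^ (5*n) + u ^ (5*n)) * ((u ^ (4*n+3))⁻¹ *
        ((1 + u^2 + u^4) * ((1 + u^4) * ((1 - u^(n+2))/(1-u))^2))) := by
        apply mul_le_mul_of_nonneg_left hX (by positivity)
    _ = (1 + u^2 + u^4) * (1 + u^4) * (u^(n+2) * (1 - u^(n+2))^2) / (u^5 * (1-u)^2) := by
        field_simp
        ring
    _ ≤ (1 + u^2 + u^4) * (1 + u^4) * (4/27) / (u^5 * (1-u)^2) := by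
        gcongr
        exact key_opt (by positivity) (pow_le_one₀ hu0.le hu1.le)
    _ = Cq q := by
        rw [Cq_eq hq, div_eq_div_iff (by positivity) (by positivity)]
        ring

end St10a

namespace St10a
open St10

variable {q : ℝ}

lemma core_off2 (hq : 1 < q) (hq2 : q < 1.06) (n : ℕ) :
    (1/2) * (uu q ^ (5*(n+2)) + uu q ^ (5*n)) * X4off2 q n ≤ Cq q := by
  have hu0 := uu_pos hq
  have hu1 := uu_lt_one hq
  have h1u := one_sub_uu_pos hq
  set u := uu q with hu
  have b0 := Bnn hq n
  have b1 := Bnn hq (n+1)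
  have b2 := Bnn hq (n+2)
  have b3 := Bnn hq (n+3)
  have m12 : (1 - u^(n+1))/(1-u) ≤ (1 - u^(n+2))/(1-u) := Bmono hq (by omega)
  have hsq : Real.sqrt ((1 - u^(n+1))/(1-u) * ((1 - u^(n+2))/(1-u)))
      ≤ (1 - u^(n+2))/(1-u) := by
    have h1 : (1 - u^(n+1))/(1-u) * ((1 - u^(n+2))/(1-u)) ≤ ((1 - u^(n+2))/(1-u))^2 := by
      rw [sq]; exact mul_le_mul_of_nonneg_right m12 b2
    calc Real.sqrt ((1 - u^(n+1))/(1-u) * ((1 - u^(n+2))/(1-u)))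
        ≤ Real.sqrt (((1 - u^(n+2))/(1-u))^2) := Real.sqrt_le_sqrt h1
      _ = (1 - u^(n+2))/(1-u) := Real.sqrt_sq b2
  have hT : (1 - u^(n+3))/(1-u) + u^2 * ((1 - u^(n+2))/(1-u)) + u^4 * ((1 - u^(n+1))/(1-u))
        + u^6 * ((1 - u^n)/(1-u))
      ≤ (1 + u^2 + u^4 + u^6) * ((1 - u^(n+3))/(1-u)) := by
    have e2 : (1 - u^(n+2))/(1-u) ≤ (1 - u^(n+3))/(1-u) := Bmono hq (by omega)
    have e1 : (1 - u^(n+1))/(1-u) ≤ (1 - u^(n+3))/(1-u) := Bmono hq (by omega)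
    have e0 : (1 - u^n)/(1-u) ≤ (1 - u^(n+3))/(1-u) := Bmono hq (by omega)
    calc _ ≤ (1 - u^(n+3))/(1-u) + u^2 * ((1 - u^(n+3))/(1-u)) + u^4 * ((1 - u^(n+3))/(1-u))
          + u^6 * ((1 - u^(n+3))/(1-u)) := by
          gcongr <;> first | exact e2 | exact e1 | exact e0 | positivity
      _ = (1 + u^2 + u^4 + u^6) * ((1 - u^(n+3))/(1-u)) := by ring
  have hT0 : 0 ≤ (1 - u^(n+3))/(1-u) + u^2 * ((1 - u^(n+2))/(1-u))
      + u^4 * ((1 - u^(n+1))/(1-u)) + u^6 * ((1 - u^n)/(1-u)) := by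
    have h2 : (0:ℝ) ≤ u^2 := by positivity
    have h4 : (0:ℝ) ≤ u^4 := by positivity
    have h6 : (0:ℝ) ≤ u^6 := by positivity
    nlinarith [mul_nonneg h2 b2, mul_nonneg h4 b1, mul_nonneg h6 b0]
  have hX : X4off2 q n ≤ (u^(4*n+6))⁻¹ * ((1 - u^(n+2))/(1-u) *
      ((1 + u^2 + u^4 + u^6) * ((1 - u^(n+3))/(1-u)))) := by
    rw [X4off2, z4 hq, z8 hq, z12 hq, qnum0 hq, qnum1 hq, qnum2 hq, qnum3 hq,
      show 8*n+12 = 2*(4*n+6) by ring, npow_uu hq]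
    rw [mul_assoc]
    apply mul_le_mul_of_nonneg_left _ (by positivity : (0:ℝ) ≤ (u^(4*n+6))⁻¹)
    apply mul_le_mul hsq hT hT0 b2
  calc (1/2) * (u^(5*(n+2)) + u^(5*n)) * X4off2 q n
      ≤ (1/2) * (u^(5*(n+2)) + u^(5*n)) * ((u^(4*n+6))⁻¹ * ((1 - u^(n+2))/(1-u) *
        ((1 + u^2 + u^4 + u^6) * ((1 - u^(n+3))/(1-u))))) := by
        apply mul_le_mul_of_nonneg_left hX (by positivity)
    _ = ((1 + u^10) * (1 + u^2 + u^4 + u^6) / 2) *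
        (u^n * ((1 - u^(n+2)) * (1 - u^(n+3)))) / (u^6 * (1-u)^2) := by
        field_simp
        ring
    _ ≤ ((1 + u^10) * (1 + u^2 + u^4 + u^6) / 2) *
        (u^n * ((1 - u^(n+3)) * (1 - u^(n+3)))) / (u^6 * (1-u)^2) := by
        have hp : u^(n+3) ≤ u^(n+2) := pow_le_pow_of_le_one hu0.le hu1.le (by omega)
        have h3 : (0:ℝ) ≤ 1 - u^(n+3) := by
          have := pow_le_one₀ hu0.le hu1.le (n := n+3); linarith
        gcongr <;> first | positivity | linarith
    _ = ((1 + u^10) * (1 + u^2 + u^4 + u^6) / 2) *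
        (u^(n+3) * (1 - u^(n+3))^2) / (u^9 * (1-u)^2) := by
        field_simp
        ring
    _ ≤ ((1 + u^10) * (1 + u^2 + u^4 + u^6) / 2) * (4/27) / (u^9 * (1-u)^2) := by
        gcongr <;>
          first
            | positivity
            | exact key_opt (by positivity) (pow_le_one₀ hu0.le hu1.le)
    _ ≤ Cq q := by
        rw [Cq_eq hq, div_le_div_iff₀ (by positivity) (by positivity)]
        nlinarith [mul_le_mul_of_nonneg_right (J2 hq hq2)
          (show (0:ℝ) ≤ 2 * u^5 * (1-u)^2 by positivity)]

lemma core_off4 (hq : 1 < q) (hq2 : q < 1.06) (n : ℕ) :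
    (1/2) * (uu q ^ (5*(n+4)) + uu q ^ (5*n)) * X4off4 q n ≤ Cq q := by
  have hu0 := uu_pos hq
  have hu1 := uu_lt_one hq
  have h1u := one_sub_uu_pos hq
  set u := uu q with hu
  have b1 := Bnn hq (n+1)
  have b2 := Bnn hq (n+2)
  have b3 := Bnn hq (n+3)
  have b4 := Bnn hq (n+4)
  have m14 : (1 - u^(n+1))/(1-u) ≤ (1 - u^(n+4))/(1-u) := Bmono hq (by omega)
  have m24 : (1 - u^(n+2))/(1-u) ≤ (1 - u^(n+4))/(1-u) := Bmono hq (by omega)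
  have m34 : (1 - u^(n+3))/(1-u) ≤ (1 - u^(n+4))/(1-u) := Bmono hq (by omega)
  have hsq : Real.sqrt ((1 - u^(n+1))/(1-u) * ((1 - u^(n+2))/(1-u)) *
      ((1 - u^(n+3))/(1-u)) * ((1 - u^(n+4))/(1-u))) ≤ ((1 - u^(n+4))/(1-u))^2 := by
    have h1 : (1 - u^(n+1))/(1-u) * ((1 - u^(n+2))/(1-u)) * ((1 - u^(n+3))/(1-u))
        * ((1 - u^(n+4))/(1-u)) ≤ (((1 - u^(n+4))/(1-u))^2)^2 := by
      have s1 : (1 - u^(n+1))/(1-u) * ((1 - u^(n+2))/(1-u))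
          ≤ (1 - u^(n+4))/(1-u) * ((1 - u^(n+4))/(1-u)) :=
        mul_le_mul m14 m24 b2 b4
      have s2 : (1 - u^(n+1))/(1-u) * ((1 - u^(n+2))/(1-u)) * ((1 - u^(n+3))/(1-u))
          ≤ (1 - u^(n+4))/(1-u) * ((1 - u^(n+4))/(1-u)) * ((1 - u^(n+4))/(1-u)) :=
        mul_le_mul s1 m34 b3 (by positivity)
      calc (1 - u^(n+1))/(1-u) * ((1 - u^(n+2))/(1-u)) * ((1 - u^(n+3))/(1-u))
            * ((1 - u^(n+4))/(1-u))
          ≤ (1 - u^(n+4))/(1-u) * ((1 - u^(n+4))/(1-u)) * ((1 - u^(n+4))/(1-u))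
            * ((1 - u^(n+4))/(1-u)) :=
            mul_le_mul s2 le_rfl b4 (by positivity)
        _ = (((1 - u^(n+4))/(1-u))^2)^2 := by ring
    calc Real.sqrt _ ≤ Real.sqrt ((((1 - u^(n+4))/(1-u))^2)^2) := Real.sqrt_le_sqrt h1
      _ = ((1 - u^(n+4))/(1-u))^2 := Real.sqrt_sq (by positivity)
  have hX : X4off4 q n ≤ (u^(4*n+7))⁻¹ * ((1 - u^(n+4))/(1-u))^2 := by
    rw [X4off4, qnum1 hq, qnum2 hq, qnum3 hq, qnum4 hq,
      show 8*n+14 = 2*(4*n+7) by ring, npow_uu hq]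
    exact mul_le_mul_of_nonneg_left hsq (by positivity)
  calc (1/2) * (u^(5*(n+4)) + u^(5*n)) * X4off4 q n
      ≤ (1/2) * (u^(5*(n+4)) + u^(5*n)) * ((u^(4*n+7))⁻¹ * ((1 - u^(n+4))/(1-u))^2) := by
        apply mul_le_mul_of_nonneg_left hX (by positivity)
    _ = ((1 + u^20) / 2) * (u^(n+4) * (1 - u^(n+4))^2) / (u^11 * (1-u)^2) := by
        field_simp
        ring
    _ ≤ ((1 + u^20) / 2) * (4/27) / (u^11 * (1-u)^2) := by
        gcongr <;>
          first
            | positivity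
            | exact key_opt (by positivity) (pow_le_one₀ hu0.le hu1.le)
    _ ≤ Cq q := by
        rw [Cq_eq hq, div_le_div_iff₀ (by positivity) (by positivity)]
        nlinarith [mul_le_mul_of_nonneg_right (J4 hq hq2)
          (show (0:ℝ) ≤ u^5 * (1-u)^2 by positivity)]

lemma hmat_le (hq : 1 < q) (hq2 : q < 1.06) (a b : ℕ) : hmat q a b ≤ Cq q := by
  by_cases h1 : a = b
  · subst h1; exact hmat_diag_le hq hq2 a
  by_cases h2 : a = b + 4
  · subst h2
    rw [hmat, X4, if_neg (by omega), if_pos rfl, z10 hq, z10 hq]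
    have := core_off4 hq hq2 b
    rw [show 5*(b+4) = 5*((b:ℕ)+4) by ring] at this
    convert this using 3 <;> push_cast <;> ring
  by_cases h3 : b = a + 4
  · subst h3
    rw [hmat, X4, if_neg (by omega), if_neg (by omega), if_pos rfl, z10 hq, z10 hq]
    have := core_off4 hq hq2 a
    rw [add_comm (uu q ^ (5*(a+4)))] at this
    convert this using 3 <;> push_cast <;> ring
  by_cases h4 : a = b + 2
  · subst h4
    rw [hmat, X4, if_neg (by omega), if_neg (by omega), if_neg (by omega), if_pos rfl,
      z10 hq, z10 hq]
    have := core_off2 hq hq2 b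
    convert this using 3 <;> push_cast <;> ring
  by_cases h5 : b = a + 2
  · subst h5
    rw [hmat, X4, if_neg (by omega), if_neg (by omega), if_neg (by omega),
      if_neg (by omega), if_pos rfl, z10 hq, z10 hq]
    have := core_off2 hq hq2 a
    rw [add_comm (uu q ^ (5*(a+2)))] at this
    convert this using 3 <;> push_cast <;> ring
  · rw [hmat, X4, if_neg h1, if_neg h2, if_neg h3, if_neg h4, if_neg h5, mul_zero]
    exact (Cq_pos hq).le

end St10a

namespace St10b
open St10 St10a

variable {q ω : ℝ}

lemma Bdiff (hq : 1 < q) {a b : ℕ} (h : a ≤ b) :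
    qnumN q b - qnumN q a = (uu q ^ a - uu q ^ b) / (1 - uu q) := by
  rw [qnumN_eq hq, qnumN_eq hq, div_sub_div_same]
  congr 1
  ring

/-- The spectral gap at level `n`, over even-distance sites. -/
lemma gap (hq : 1 < q) {n m : ℕ} (hne : m ≠ n) (hpar : m % 2 = n % 2) :
    uu q ^ n * (1 + uu q) ≤ |qnumN q n - qnumN q m| := by
  have hu0 := uu_pos hq
  have hu1 := uu_lt_one hq
  have h1u := one_sub_uu_pos hq
  rcases lt_or_gt_of_ne hne with h | h
  · -- m ≤ n - 2
    have hm2 : m + 2 ≤ n := by omega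
    have hmono := qnumN_mono hq (le_of_lt h)
    rw [abs_of_nonneg (by linarith), Bdiff hq (le_of_lt h)]
    have key : uu q ^ (n-2) - uu q ^ n ≤ uu q ^ m - uu q ^ n := by
      have : uu q ^ (n-2) ≤ uu q ^ m := pow_le_pow_of_le_one hu0.le hu1.le (by omega)
      linarith
    have e1 : uu q ^ (n-2) - uu q ^ n = uu q ^ (n-2) * (1 - uu q^2) := by
      rw [mul_sub, mul_one, ← pow_add]
      congr 2
      omega
    rw [le_div_iff₀ h1u]
    have e2 : uu q ^ n * (1 + uu q) * (1 - uu q) = uu q ^ n * (1 - uu q ^ 2) := by ring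
    rw [e2]
    have e3 : uu q ^ n * (1 - uu q^2) ≤ uu q ^ (n-2) * (1 - uu q^2) := by
      apply mul_le_mul_of_nonneg_right (pow_le_pow_of_le_one hu0.le hu1.le (by omega))
      nlinarith
    linarith [key, e1]
  · -- m ≥ n + 2
    have hm2 : n + 2 ≤ m := by omega
    have hmono := qnumN_mono hq (le_of_lt h)
    rw [abs_of_nonpos (by linarith), neg_sub, Bdiff hq (le_of_lt h)]
    have key : uu q ^ n - uu q ^ (n+2) ≤ uu q ^ n - uu q ^ m := by
      have : uu q ^ m ≤ uu q ^ (n+2) := pow_le_pow_of_le_one hu0.le hu1.le (by omega)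
      linarith
    rw [le_div_iff₀ h1u]
    have e2 : uu q ^ n * (1 + uu q) * (1 - uu q) = uu q ^ n - uu q ^ (n+2) := by ring
    linarith

/-- adjacency for nonzero entries of `hmat`. -/
def near (a b : ℕ) : Prop := b = a ∨ b = a + 2 ∨ a = b + 2 ∨ b = a + 4 ∨ a = b + 4

instance near.dec : ∀ a b, Decidable (near a b) := fun a b => by
  unfold near; exact inferInstance

lemma hmat_eq_zero {a b : ℕ} (h : ¬ near a b) : hmat q a b = 0 := by
  rw [hmat, X4]
  split_ifs with h1 h2 h3 h4 h5 <;>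
    first
      | (exfalso; apply h; unfold near; omega)
      | simp

variable (n m : ℕ)

/-- the padded path. -/
def w (ν : Fin (m+1) → ℕ) : ℕ → ℕ := fun j => if h : j < m+1 then ν ⟨j, h⟩ else n

lemma w_eq (ν : Fin (m+1) → ℕ) {j : ℕ} (h : j < m+1) : w n m ν j = ν ⟨j, h⟩ := dif_pos h

/-- valid paths. -/
def pathOK (ν : Fin (m+1) → ℕ) : Prop :=
  (∀ j, ν j ≠ n) ∧ near n (w n m ν 0) ∧
    ∀ i : Fin m, near (w n m ν (i : ℕ)) (w n m ν ((i : ℕ) + 1))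

def box : Finset (Fin (m+1) → ℕ) :=
  Fintype.piFinset (fun _ => Finset.range (n + 4*m + 5))

open Classical in
noncomputable def P : Finset (Fin (m+1) → ℕ) := (box n m).filter (pathOK n m)

lemma chain_le {ν : Fin (m+1) → ℕ} (h : pathOK n m ν) :
    ∀ j, j < m + 1 → w n m ν j ≤ n + 4*(j+1) := by
  intro j
  induction j with
  | zero =>
    intro _
    have := h.2.1
    unfold near at this
    omega
  | succ i ih =>
    intro hi
    have hstep := h.2.2 ⟨i, by omega⟩
    unfold near at hstep
    have := ih (by omega)
    simp only at hstep
    omega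

lemma pathOK_mem_box {ν : Fin (m+1) → ℕ} (h : pathOK n m ν) : ν ∈ box n m := by
  rw [box, Fintype.mem_piFinset]
  intro j
  rw [Finset.mem_range]
  have := chain_le n m h (j : ℕ) j.isLt
  rw [w_eq n m ν j.isLt] at this
  simp only [Fin.eta] at this
  have hj : (j : ℕ) ≤ m := by omega
  omega

lemma chain_parity {ν : Fin (m+1) → ℕ} (h : pathOK n m ν) :
    ∀ j, j < m + 1 → w n m ν j % 2 = n % 2 := by
  intro j
  induction j with
  | zero =>
    intro _
    have := h.2.1
    unfold near at this
    omega
  | succ i ih =>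
    intro hi
    have hstep := h.2.2 ⟨i, by omega⟩
    unfold near at hstep
    have := ih (by omega)
    simp only at hstep
    omega

lemma mem_P_iff {ν : Fin (m+1) → ℕ} : ν ∈ P n m ↔ ν ∈ box n m ∧ pathOK n m ν := by
  classical
  rw [P]
  simp [Finset.mem_filter]

end St10b

namespace St10b
open St10 St10a

variable (q ω : ℝ) (n m : ℕ)

noncomputable def den (ν : Fin (m+1) → ℕ) : ℂ :=
  ∏ j ∈ Finset.range (m+1), ((ω * qnumN q n - ω * qnumN q (w n m ν j) : ℝ) : ℂ)

noncomputable def summand (Δ γ : ℂ) (ν : Fin (m+1) → ℕ) : ℂ :=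
  if ∀ j, ν j ≠ n then
    (γ * (hmat q n (w n m ν 0) : ℂ)) *
      (∏ j ∈ Finset.Icc 2 (m+1),
        (γ * (hmat q (w n m ν (j-2)) (w n m ν (j-1)) : ℂ)
          - Δ * (if w n m ν (j-2) = w n m ν (j-1) then 1 else 0))) *
      (γ * (hmat q (w n m ν m) n : ℂ)) / den q ω n m ν
  else 0

lemma RSterm_succ (Δ γ : ℂ) :
    RSterm q ω n Δ γ (m+2) = ∑' ν : Fin (m+1) → ℕ, summand q ω n m Δ γ ν := by
  rw [RSterm, if_neg (by omega)]
  rfl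

variable {q ω n m}

lemma summand_eq_zero {Δ γ : ℂ} {ν : Fin (m+1) → ℕ} (h : ν ∉ P n m) :
    summand q ω n m Δ γ ν = 0 := by
  rw [summand]
  by_cases hg : ∀ j, ν j ≠ n
  swap
  · rw [if_neg hg]
  rw [if_pos hg]
  by_cases h0 : near n (w n m ν 0)
  swap
  · rw [hmat_eq_zero h0]
    simp
  by_cases hc : ∀ i : Fin m, near (w n m ν (i : ℕ)) (w n m ν ((i : ℕ) + 1))
  · exact absurd ((mem_P_iff n m).2 ⟨pathOK_mem_box n m ⟨hg, h0, hc⟩, ⟨hg, h0, hc⟩⟩) h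
  · push_neg at hc
    obtain ⟨i, hi⟩ := hc
    have hmem : (i : ℕ) + 2 ∈ Finset.Icc 2 (m+1) := by
      rw [Finset.mem_Icc]
      have := i.isLt
      omega
    rw [Finset.prod_eq_zero hmem ?fz]
    case fz =>
      have e2 : (i : ℕ) + 2 - 2 = (i : ℕ) := by omega
      have e1 : (i : ℕ) + 2 - 1 = (i : ℕ) + 1 := by omega
      rw [e2, e1, hmat_eq_zero hi,
        if_neg (fun hh => hi (Or.inl hh.symm))]
      simp
    simp

lemma tsum_summand (Δ γ : ℂ) :
    ∑' ν : Fin (m+1) → ℕ, summand q ω n m Δ γ ν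
      = ∑ ν ∈ P n m, summand q ω n m Δ γ ν :=
  tsum_eq_sum (fun _ hν => summand_eq_zero hν)

/-- encoding for the path-counting bound. -/
def code0 (n x : ℕ) : ℕ :=
  if x = n+2 then 0 else if x = n+4 then 1 else if n = x+2 then 2 else 3

def code (a b : ℕ) : ℕ :=
  if b = a then 0 else if b = a+2 then 1 else if a = b+2 then 2
    else if b = a+4 then 3 else 4

def encode (n m : ℕ) (ν : Fin (m+1) → ℕ) : ℕ × (Fin m → ℕ) :=
  (code0 n (w n m ν 0), fun i => code (w n m ν (i : ℕ)) (w n m ν ((i : ℕ) + 1)))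

lemma encode_injOn : Set.InjOn (encode n m) (P n m) := by
  intro ν hν ν' hν' he
  simp only [Finset.mem_coe, mem_P_iff] at hν hν'
  obtain ⟨-, hg, h0, hc⟩ := hν
  obtain ⟨-, hg', h0', hc'⟩ := hν'
  have hgw : ∀ i, i < m+1 → w n m ν i ≠ n := fun i h => by
    rw [w_eq n m ν h]; exact hg _
  have hgw' : ∀ i, i < m+1 → w n m ν' i ≠ n := fun i h => by
    rw [w_eq n m ν' h]; exact hg' _
  have e0 : code0 n (w n m ν 0) = code0 n (w n m ν' 0) := congrArg Prod.fst he
  have ec : ∀ i : Fin m, code (w n m ν (i:ℕ)) (w n m ν ((i:ℕ)+1))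
      = code (w n m ν' (i:ℕ)) (w n m ν' ((i:ℕ)+1)) :=
    fun i => congrArg (fun p => p.2 i) he
  have key : ∀ i, i < m + 1 → w n m ν i = w n m ν' i := by
    intro i
    induction i with
    | zero =>
      intro _
      have z := hgw 0 (by omega)
      have z' := hgw' 0 (by omega)
      unfold near at h0 h0'
      unfold code0 at e0
      split_ifs at e0 <;> omega
    | succ i ih =>
      intro h
      have hi : i < m := by omega
      have hh := ec ⟨i, hi⟩
      have hcc := hc ⟨i, hi⟩
      have hcc' := hc' ⟨i, hi⟩
      simp only [Fin.val_mk] at hh hcc hcc'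
      rw [ih (by omega)] at hh hcc
      unfold near at hcc hcc'
      unfold code at hh
      split_ifs at hh <;> omega
  funext j
  have hj := key (j : ℕ) j.isLt
  rw [w_eq n m ν j.isLt, w_eq n m ν' j.isLt] at hj
  simpa using hj

lemma card_P_le : (P n m).card ≤ 4 * 5 ^ m := by
  classical
  have hmaps : ∀ ν ∈ P n m, encode n m ν ∈
      (Finset.range 4) ×ˢ (Fintype.piFinset fun _ : Fin m => Finset.range 5) := by
    intro ν _
    rw [Finset.mem_product, Finset.mem_range, Fintype.mem_piFinset]
    constructor
    · show code0 n (w n m ν 0) < 4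
      unfold code0
      split_ifs <;> omega
    · intro i
      rw [Finset.mem_range]
      show code (w n m ν (i : ℕ)) (w n m ν ((i : ℕ) + 1)) < 5
      unfold code
      split_ifs <;> omega
  have h := Finset.card_le_card_of_injOn (encode n m) hmaps encode_injOn
  calc (P n m).card
      ≤ ((Finset.range 4) ×ˢ (Fintype.piFinset fun _ : Fin m => Finset.range 5)).card := h
    _ = 4 * 5 ^ m := by
        rw [Finset.card_product, Finset.card_range, Fintype.card_piFinset]
        simp

end St10b

namespace St10c
open St10 St10a St10b

variable (q ω : ℝ) (n : ℕ)

/-- the coupling radius `γ(q)`. -/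
noncomputable def gam : ℝ := ω * ((1 + q ^ (-2:ℤ)) * q ^ (-(2 * (n:ℤ))) - 1) / (5 * Cq q)

/-- the (reduced) spectral gap `δ = ω u^n (1+u)`. -/
noncomputable def del : ℝ := ω * (uu q ^ n * (1 + uu q))

variable {q ω n}

lemma hn_eq (hq : 1 < q) : (1 + q ^ (-2:ℤ)) * q ^ (-(2 * (n:ℤ))) = (1 + uu q) * uu q ^ n := by
  rw [z2 hq, show (-(2 * (n:ℤ))) = -(2 * (n:ℕ) : ℤ) by push_cast; ring, zpow_uu hq]

section withhyp
variable (hq : 1 < q) (hq2 : q < 1.06) (hω : 0 < ω)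
  (hn : 1 < (1 + q ^ (-2 : ℤ)) * q ^ (-(2 * (n : ℤ))))

include hq hω hn in
lemma del_gt : ω < del q ω n := by
  rw [del]
  have h := hn
  rw [hn_eq hq] at h
  nlinarith

include hq hω in
lemma del_pos : 0 < del q ω n := by
  have hu0 := uu_pos hq
  rw [del]
  positivity

include hq hq2 hω hn in
lemma gam_pos : 0 < gam q ω n := by
  rw [gam]
  have hC := Cq_pos hq
  have h := hn
  apply div_pos (mul_pos hω (by linarith)) (by linarith)

include hq hq2 hω hn in
lemma gam_mul_Cq : gam q ω n * Cq q = (del q ω n - ω) / 5 := by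
  have hC := Cq_pos hq
  rw [gam, del, hn_eq hq]
  field_simp

end withhyp

/-- affine linear forms on `ℂ × ℂ`. -/
noncomputable def ee (c d : ℂ) : (ℂ × ℂ) →L[ℂ] ℂ :=
  c • (ContinuousLinearMap.snd ℂ ℂ ℂ) + d • (ContinuousLinearMap.fst ℂ ℂ ℂ)

lemma ee_apply (c d : ℂ) (z : ℂ × ℂ) : ee c d z = c * z.2 + d * z.1 := by
  simp [ee]

lemma ee_norm (c d : ℂ) : ‖ee c d‖ ≤ ‖c‖ + ‖d‖ := by
  apply ContinuousLinearMap.opNorm_le_bound _ (by positivity)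
  intro z
  rw [ee_apply]
  calc ‖c * z.2 + d * z.1‖ ≤ ‖c * z.2‖ + ‖d * z.1‖ := norm_add_le _ _
    _ = ‖c‖ * ‖z.2‖ + ‖d‖ * ‖z.1‖ := by rw [norm_mul, norm_mul]
    _ ≤ ‖c‖ * ‖z‖ + ‖d‖ * ‖z‖ := by
        gcongr
        · exact norm_snd_le z
        · exact norm_fst_le z
    _ = (‖c‖ + ‖d‖) * ‖z‖ := by ring

variable (q ω n)

/-- the linear factors of one path contribution. -/
noncomputable def slots (m : ℕ) (ν : Fin (m+1) → ℕ) : Fin (m+2) → ((ℂ × ℂ) →L[ℂ] ℂ) :=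
  Fin.cons (ee ((gam q ω n : ℂ) * (hmat q n (w n m ν 0) : ℂ)) 0)
    (Fin.snoc
      (fun i : Fin m => ee ((gam q ω n : ℂ) * (hmat q (w n m ν (i:ℕ)) (w n m ν ((i:ℕ)+1)) : ℂ))
        (-((ω : ℂ)/5) * (if w n m ν (i:ℕ) = w n m ν ((i:ℕ)+1) then 1 else 0)))
      (ee ((gam q ω n : ℂ) * (hmat q (w n m ν m) n : ℂ)) 0))

noncomputable def Mnu (m : ℕ) (ν : Fin (m+1) → ℕ) :
    ContinuousMultilinearMap ℂ (fun _ : Fin (m+2) => ℂ × ℂ) ℂ :=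
  (ContinuousMultilinearMap.mkPiAlgebraFin ℂ (m+2) ℂ).compContinuousLinearMap
    (slots q ω n m ν)

/-- the formal power series of `G ∘ L`. -/
noncomputable def pser : FormalMultilinearSeries ℂ (ℂ × ℂ) ℂ := fun k =>
  match k with
  | 0 => 0
  | 1 => (ContinuousMultilinearMap.mkPiAlgebraFin ℂ 1 ℂ).compContinuousLinearMap
      (fun _ => ee ((gam q ω n : ℂ) * (hmat q n n : ℂ)) (-((ω : ℂ)/5)))
  | (m+2) => ∑ ν ∈ P n m, (den q ω n m ν)⁻¹ • Mnu q ω n m ν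

variable {q ω n}

section bounds
variable (hq : 1 < q) (hq2 : q < 1.06) (hω : 0 < ω)
  (hn : 1 < (1 + q ^ (-2 : ℤ)) * q ^ (-(2 * (n : ℤ))))

include hq hq2 hω hn

lemma coeff_norm (a b : ℕ) :
    ‖(gam q ω n : ℂ) * (hmat q a b : ℂ)‖ ≤ (del q ω n - ω) / 5 := by
  rw [norm_mul, Complex.norm_real, Complex.norm_real, Real.norm_eq_abs, Real.norm_eq_abs,
    abs_of_pos (gam_pos hq hq2 hω hn), abs_of_nonneg (hmat_nonneg hq a b)]
  calc gam q ω n * hmat q a b ≤ gam q ω n * Cq q :=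
        mul_le_mul_of_nonneg_left (hmat_le hq hq2 a b) (gam_pos hq hq2 hω hn).le
    _ = (del q ω n - ω) / 5 := gam_mul_Cq hq hq2 hω hn

lemma slot_norm (m : ℕ) (ν : Fin (m+1) → ℕ) (i : Fin (m+2)) :
    ‖slots q ω n m ν i‖ ≤ del q ω n / 5 := by
  have hd := del_gt hq hω hn
  induction i using Fin.cases with
  | zero =>
    rw [slots, Fin.cons_zero]
    calc ‖ee ((gam q ω n : ℂ) * (hmat q n (w n m ν 0) : ℂ)) 0‖
        ≤ ‖(gam q ω n : ℂ) * (hmat q n (w n m ν 0) : ℂ)‖ + ‖(0:ℂ)‖ := ee_norm _ _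
      _ ≤ (del q ω n - ω)/5 + 0 := by
          rw [norm_zero]
          exact add_le_add (coeff_norm hq hq2 hω hn _ _) le_rfl
      _ ≤ del q ω n / 5 := by linarith
  | succ j =>
    rw [slots, Fin.cons_succ]
    induction j using Fin.lastCases with
    | last =>
      rw [Fin.snoc_last]
      calc ‖ee ((gam q ω n : ℂ) * (hmat q (w n m ν m) n : ℂ)) 0‖
          ≤ ‖(gam q ω n : ℂ) * (hmat q (w n m ν m) n : ℂ)‖ + ‖(0:ℂ)‖ := ee_norm _ _
        _ ≤ (del q ω n - ω)/5 + 0 := by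
            rw [norm_zero]
            exact add_le_add (coeff_norm hq hq2 hω hn _ _) le_rfl
        _ ≤ del q ω n / 5 := by linarith
    | cast i =>
      rw [Fin.snoc_castSucc]
      refine (ee_norm _ _).trans ?_
      have h2 : ‖-((ω : ℂ)/5) * (if w n m ν (i:ℕ) = w n m ν ((i:ℕ)+1) then (1:ℂ) else 0)‖
          ≤ ω / 5 := by
        rw [norm_mul, norm_neg, norm_div]
        split_ifs <;> simp [Complex.norm_real, abs_of_pos hω] <;> positivity
      have h1 := coeff_norm hq hq2 hω hn (w n m ν (i:ℕ)) (w n m ν ((i:ℕ)+1))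
      linarith

lemma den_norm_ge (m : ℕ) {ν : Fin (m+1) → ℕ} (hν : ν ∈ P n m) :
    del q ω n ^ (m+1) ≤ ‖den q ω n m ν‖ := by
  have hp : pathOK n m ν := ((mem_P_iff n m).1 hν).2
  rw [den]
  rw [norm_prod]
  have hfac : ∀ j ∈ Finset.range (m+1),
      del q ω n ≤ ‖((ω * qnumN q n - ω * qnumN q (w n m ν j) : ℝ) : ℂ)‖ := by
    intro j hj
    rw [Finset.mem_range] at hj
    rw [← mul_sub, Complex.norm_real, Real.norm_eq_abs, abs_mul, abs_of_pos hω]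
    rw [del]
    apply mul_le_mul_of_nonneg_left _ hω.le
    apply gap hq
    · rw [w_eq n m ν hj]
      exact hp.1 _
    · exact chain_parity n m hp j hj
  calc del q ω n ^ (m+1) = ∏ _j ∈ Finset.range (m+1), del q ω n := by
        rw [Finset.prod_const, Finset.card_range]
    _ ≤ _ := Finset.prod_le_prod (fun _ _ => (del_pos hq hω).le) hfac

lemma Mnu_norm (m : ℕ) (ν : Fin (m+1) → ℕ) :
    ‖Mnu q ω n m ν‖ ≤ (del q ω n / 5) ^ (m+2) := by
  rw [Mnu]
  refine (ContinuousMultilinearMap.norm_compContinuousLinearMap_le _ _).trans ?_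
  calc ‖ContinuousMultilinearMap.mkPiAlgebraFin ℂ (m+2) ℂ‖ * ∏ i, ‖slots q ω n m ν i‖
      ≤ 1 * ∏ i, ‖slots q ω n m ν i‖ := by
        apply mul_le_mul_of_nonneg_right _ (by positivity)
        exact le_of_eq ContinuousMultilinearMap.norm_mkPiAlgebraFin
    _ = ∏ i, ‖slots q ω n m ν i‖ := one_mul _
    _ ≤ ∏ _i : Fin (m+2), (del q ω n / 5) :=
        Finset.prod_le_prod (fun _ _ => norm_nonneg _)
          (fun i _ => slot_norm hq hq2 hω hn m ν i)
    _ = (del q ω n / 5) ^ (m+2) := by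
        rw [Finset.prod_const, Finset.card_univ, Fintype.card_fin]

lemma pser_norm (k : ℕ) : ‖pser q ω n k‖ ≤ del q ω n := by
  have hd0 := del_pos (n := n) hq hω
  have hdω := del_gt hq hω hn
  match k with
  | 0 =>
    show ‖(0 : ContinuousMultilinearMap ℂ (fun _ : Fin 0 => ℂ × ℂ) ℂ)‖ ≤ del q ω n
    rw [norm_zero]
    exact hd0.le
  | 1 =>
    show ‖(ContinuousMultilinearMap.mkPiAlgebraFin ℂ 1 ℂ).compContinuousLinearMap
      (fun _ => ee ((gam q ω n : ℂ) * (hmat q n n : ℂ)) (-((ω : ℂ)/5)))‖ ≤ del q ω n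
    refine (ContinuousMultilinearMap.norm_compContinuousLinearMap_le _ _).trans ?_
    have h1 : ‖ee ((gam q ω n : ℂ) * (hmat q n n : ℂ)) (-((ω : ℂ)/5))‖ ≤ del q ω n / 5 := by
      refine (ee_norm _ _).trans ?_
      have := coeff_norm hq hq2 hω hn n n
      have h2 : ‖-((ω:ℂ)/5)‖ = ω/5 := by
        rw [norm_neg, norm_div]
        simp [Complex.norm_real, abs_of_pos hω]
      linarith
    calc ‖ContinuousMultilinearMap.mkPiAlgebraFin ℂ 1 ℂ‖ * ∏ _i : Fin 1, ‖ee ((gam q ω n : ℂ) * (hmat q n n : ℂ)) (-((ω : ℂ)/5))‖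
        ≤ 1 * (del q ω n / 5) := by
          rw [ContinuousMultilinearMap.norm_mkPiAlgebraFin, Finset.prod_const,
            Finset.card_univ, Fintype.card_fin, pow_one]
          exact mul_le_mul_of_nonneg_left h1 (by norm_num)
      _ ≤ del q ω n := by linarith
  | (m+2) =>
    show ‖∑ ν ∈ P n m, (den q ω n m ν)⁻¹ • Mnu q ω n m ν‖ ≤ del q ω n
    refine (norm_sum_le _ _).trans ?_
    have hterm : ∀ ν ∈ P n m,
        ‖(den q ω n m ν)⁻¹ • Mnu q ω n m ν‖
          ≤ (del q ω n)⁻¹ ^ (m+1) * (del q ω n / 5) ^ (m+2) := by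
      intro ν hν
      refine (ContinuousMultilinearMap.opNorm_smul_le _ _).trans ?_
      rw [norm_inv]
      apply mul_le_mul _ (Mnu_norm hq hq2 hω hn m ν) (norm_nonneg _) (by positivity)
      rw [inv_pow]
      apply inv_anti₀ (by positivity)
      exact den_norm_ge hq hq2 hω hn m hν
    calc ∑ ν ∈ P n m, ‖(den q ω n m ν)⁻¹ • Mnu q ω n m ν‖
        ≤ ∑ _ν ∈ P n m, (del q ω n)⁻¹ ^ (m+1) * (del q ω n / 5) ^ (m+2) :=
          Finset.sum_le_sum hterm
      _ = (P n m).card * ((del q ω n)⁻¹ ^ (m+1) * (del q ω n / 5) ^ (m+2)) := by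
          rw [Finset.sum_const, nsmul_eq_mul]
      _ ≤ (4 * 5 ^ m) * ((del q ω n)⁻¹ ^ (m+1) * (del q ω n / 5) ^ (m+2)) := by
          apply mul_le_mul_of_nonneg_right _ (by positivity)
          exact_mod_cast Nat.cast_le.2 (card_P_le)
      _ = (4 / 25) * del q ω n := by
          rw [div_pow, inv_pow]
          field_simp
          ring
      _ ≤ del q ω n := by linarith

end bounds
end St10c

namespace St10c
open St10 St10a St10b

variable {q ω : ℝ} {n : ℕ}

lemma Mnu_eval (m : ℕ) (ν : Fin (m+1) → ℕ) (z : ℂ × ℂ) :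
    Mnu q ω n m ν (fun _ => z)
      = ((gam q ω n : ℂ) * z.2 * (hmat q n (w n m ν 0) : ℂ)) *
        (∏ i ∈ Finset.range m,
          ((gam q ω n : ℂ) * z.2 * (hmat q (w n m ν i) (w n m ν (i+1)) : ℂ)
            - (ω : ℂ)/5 * z.1 * (if w n m ν i = w n m ν (i+1) then 1 else 0))) *
        ((gam q ω n : ℂ) * z.2 * (hmat q (w n m ν m) n : ℂ)) := by
  have h0 : Mnu q ω n m ν (fun _ => z) = ∏ i : Fin (m+2), slots q ω n m ν i z := by
    rw [Mnu, ContinuousMultilinearMap.compContinuousLinearMap_apply,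
      ContinuousMultilinearMap.mkPiAlgebraFin_apply, List.prod_ofFn]
  rw [h0, Fin.prod_univ_succ, Fin.prod_univ_castSucc]
  simp only [slots, Fin.cons_zero, Fin.cons_succ, Fin.snoc_castSucc, Fin.snoc_last, ee_apply]
  rw [← mul_assoc]
  congr 1
  congr 1
  · ring
  · rw [← Fin.prod_univ_eq_prod_range (fun i =>
      (gam q ω n : ℂ) * z.2 * (hmat q (w n m ν i) (w n m ν (i+1)) : ℂ)
        - (ω : ℂ)/5 * z.1 * (if w n m ν i = w n m ν (i+1) then 1 else 0)) m]
    exact Finset.prod_congr rfl (fun i _ => by ring)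
  · ring

lemma summand_eval (m : ℕ) {ν : Fin (m+1) → ℕ} (hν : ν ∈ P n m) (z : ℂ × ℂ) :
    summand q ω n m ((ω : ℂ)/5 * z.1) ((gam q ω n : ℂ) * z.2) ν
      = (den q ω n m ν)⁻¹ * Mnu q ω n m ν (fun _ => z) := by
  have hg : ∀ j, ν j ≠ n := ((mem_P_iff n m).1 hν).2.1
  rw [summand, if_pos hg, Mnu_eval, div_eq_mul_inv, mul_comm]
  congr 2
  rw [show Finset.Icc 2 (m+1) = Finset.Ico 2 (m+2) from (Finset.Ico_add_one_right_eq_Icc 2 (m+1)).symm,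
    Finset.prod_Ico_eq_prod_range]
  congr 1
  apply Finset.prod_congr rfl
  intro j _
  have e2 : 2 + j - 2 = j := by omega
  have e1 : 2 + j - 1 = j + 1 := by omega
  rw [e2, e1]

lemma pser_eval2 (m : ℕ) (z : ℂ × ℂ) :
    pser q ω n (m+2) (fun _ => z)
      = RSterm q ω n ((ω : ℂ)/5 * z.1) ((gam q ω n : ℂ) * z.2) (m+2) := by
  rw [RSterm_succ, tsum_summand]
  show (∑ ν ∈ P n m, (den q ω n m ν)⁻¹ • Mnu q ω n m ν) (fun _ => z) = _
  rw [ContinuousMultilinearMap.sum_apply]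
  refine Finset.sum_congr rfl fun ν hν => ?_
  rw [ContinuousMultilinearMap.smul_apply, smul_eq_mul]
  exact (summand_eval m hν z).symm

lemma pser_eval1 (z : ℂ × ℂ) :
    pser q ω n 1 (fun _ => z)
      = (gam q ω n : ℂ) * z.2 * (hmat q n n : ℂ) - (ω : ℂ)/5 * z.1 := by
  show ((ContinuousMultilinearMap.mkPiAlgebraFin ℂ 1 ℂ).compContinuousLinearMap
      (fun _ => ee ((gam q ω n : ℂ) * (hmat q n n : ℂ)) (-((ω : ℂ)/5)))) (fun _ => z) = _
  rw [ContinuousMultilinearMap.compContinuousLinearMap_apply,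
    ContinuousMultilinearMap.mkPiAlgebraFin_apply, List.prod_ofFn, Fin.prod_univ_one,
    ee_apply]
  ring

lemma pser_eval0 (z : ℂ × ℂ) : pser q ω n 0 (fun _ => z) = 0 := rfl

end St10c

namespace St10c
open St10 St10a St10b

variable {q ω : ℝ} {n : ℕ}

noncomputable def ff (q ω : ℝ) (n : ℕ) : ℂ × ℂ → ℂ := fun z =>
  (∑' k : ℕ, RSterm q ω n ((ω : ℂ)/5 * z.1) ((gam q ω n : ℂ) * z.2) (k + 1))
    - (ω : ℂ)/5 * z.1

section final
variable (hq : 1 < q) (hq2 : q < 1.06) (hω : 0 < ω)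
  (hn : 1 < (1 + q ^ (-2 : ℤ)) * q ^ (-(2 * (n : ℤ))))

include hq hq2 hω hn

lemma hasfps : HasFPowerSeriesOnBall (ff q ω n) (pser q ω n) 0 1 := by
  constructor
  · apply FormalMultilinearSeries.le_radius_of_bound _ (del q ω n)
    intro k
    simp only [NNReal.coe_one, one_pow, mul_one]
    exact pser_norm hq hq2 hω hn k
  · exact zero_lt_one
  · intro y hy
    rw [mem_emetric_ball_zero_iff] at hy
    have hy1 : ‖y‖ < 1 := by rw [enorm_eq_nnnorm] at hy; exact_mod_cast hy
    have hbound : ∀ k, ‖pser q ω n k (fun _ => y)‖ ≤ del q ω n * ‖y‖^k := by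
      intro k
      refine (ContinuousMultilinearMap.le_opNorm _ _).trans ?_
      have hpk : ∏ _i : Fin k, ‖y‖ = ‖y‖ ^ k := by
        rw [Finset.prod_const, Finset.card_univ, Fintype.card_fin]
      calc ‖pser q ω n k‖ * ∏ i : Fin k, ‖(fun _ : Fin k => y) i‖
          = ‖pser q ω n k‖ * ‖y‖ ^ k := by rw [← hpk]
        _ ≤ del q ω n * ‖y‖ ^ k := by
            apply mul_le_mul_of_nonneg_right (pser_norm hq hq2 hω hn k) (by positivity)
    have hsum : Summable (fun k => pser q ω n k (fun _ => y)) :=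
      Summable.of_norm_bounded
        ((summable_geometric_of_lt_one (norm_nonneg y) hy1).mul_left (del q ω n)) hbound
    rw [zero_add]
    suffices hts : (∑' k, pser q ω n k (fun _ => y)) = ff q ω n y by
      rw [← hts]
      exact hsum.hasSum
    have hshift : Summable (fun k => pser q ω n (k+1) (fun _ => y)) :=
      (summable_nat_add_iff 1).2 hsum
    have heq : (fun k => pser q ω n (k+1) (fun _ => y))
        = fun k => RSterm q ω n ((ω : ℂ)/5 * y.1) ((gam q ω n : ℂ) * y.2) (k+1)
            + (if k = 0 then -((ω : ℂ)/5 * y.1) else 0) := by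
      funext k
      cases k with
      | zero =>
        rw [pser_eval1, if_pos rfl, RSterm, if_pos rfl]
        ring
      | succ k =>
        rw [pser_eval2 k, if_neg (by omega), add_zero]
    have hE : Summable (fun k : ℕ => if k = 0 then -((ω : ℂ)/5 * y.1) else 0) :=
      ⟨_, hasSum_ite_eq 0 _⟩
    have hR : Summable (fun k =>
        RSterm q ω n ((ω : ℂ)/5 * y.1) ((gam q ω n : ℂ) * y.2) (k+1)) := by
      have h2 := hshift
      rw [heq] at h2
      have h3 := h2.sub hE
      apply h3.congr
      intro k
      ring
    calc ∑' k, pser q ω n k (fun _ => y)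
        = pser q ω n 0 (fun _ => y) + ∑' k, pser q ω n (k+1) (fun _ => y) :=
          Summable.tsum_eq_zero_add hsum
      _ = ∑' k, pser q ω n (k+1) (fun _ => y) := by rw [pser_eval0, zero_add]
      _ = ∑' k, (RSterm q ω n ((ω : ℂ)/5 * y.1) ((gam q ω n : ℂ) * y.2) (k+1)
            + (if k = 0 then -((ω : ℂ)/5 * y.1) else 0)) := by rw [heq]
      _ = (∑' k, RSterm q ω n ((ω : ℂ)/5 * y.1) ((gam q ω n : ℂ) * y.2) (k+1))
            + (∑' k : ℕ, if k = 0 then -((ω : ℂ)/5 * y.1) else 0) := Summable.tsum_add hR hE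
      _ = ff q ω n y := by
          rw [tsum_ite_eq, ff]
          ring

end final
end St10c

end

/-- For `1 < q < 1.06`, `\omega > 0` (units `2m\omega = 1`), a level `n` with
`(1 + q^(-2)) q^(-2n) > 1`, and `\gamma(q) = \omega ((1 + q^(-2)) q^(-2n) - 1)/(5 C(q))`:
the function `G(\Delta, \gamma) = \sum_{k>=1} E_n^(k)(\Delta, \gamma) - \Delta` is analytic
on the polydisc `{ (\Delta, \gamma) : |\Delta| < \omega/5, |\gamma| < \gamma(q) }`. -/
theorem G_analytic (q ω : ℝ) (hq1 : 1 < q) (hq2 : q < 1.06) (hω : 0 < ω)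
    (n : ℕ) (hn : 1 < (1 + q ^ (-2 : ℤ)) * q ^ (-(2 * (n : ℤ)))) :
    AnalyticOnNhd ℂ
      (fun p : ℂ × ℂ => (∑' k : ℕ, RSterm q ω n p.1 p.2 (k + 1)) - p.1)
      {p : ℂ × ℂ | ‖p.1‖ < ω / 5 ∧
        ‖p.2‖ < ω * ((1 + q ^ (-2 : ℤ)) * q ^ (-(2 * (n : ℤ))) - 1) / (5 * Cq q)} := by
    classical
  have hgam : St10c.gam q ω n
      = ω * ((1 + q ^ (-2 : ℤ)) * q ^ (-(2 * (n : ℤ))) - 1) / (5 * Cq q) := rfl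
  have hgam_pos : 0 < St10c.gam q ω n := St10c.gam_pos hq1 hq2 hω hn
  have hω0 : ((ω : ℝ) : ℂ) ≠ 0 := by
    exact_mod_cast ne_of_gt hω
  have hg0 : ((St10c.gam q ω n : ℝ) : ℂ) ≠ 0 := by
    exact_mod_cast ne_of_gt hgam_pos
  -- the scaling map
  set Linv : (ℂ × ℂ) →L[ℂ] (ℂ × ℂ) :=
    ((5/(ω : ℂ)) • ContinuousLinearMap.fst ℂ ℂ ℂ).prod
      (((St10c.gam q ω n : ℂ)⁻¹) • ContinuousLinearMap.snd ℂ ℂ ℂ) with hLinv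
  have hL1 : ∀ p : ℂ × ℂ, (Linv p).1 = 5/(ω : ℂ) * p.1 := fun p => rfl
  have hL2 : ∀ p : ℂ × ℂ, (Linv p).2 = (St10c.gam q ω n : ℂ)⁻¹ * p.2 := fun p => rfl
  have hfeq : ∀ p : ℂ × ℂ, St10c.ff q ω n (Linv p)
      = (∑' k : ℕ, RSterm q ω n p.1 p.2 (k + 1)) - p.1 := by
    intro p
    have e1 : (ω : ℂ)/5 * (Linv p).1 = p.1 := by
      rw [hL1]
      field_simp
    have e2 : (St10c.gam q ω n : ℂ) * (Linv p).2 = p.2 := by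
      rw [hL2]
      field_simp
    rw [St10c.ff, e1, e2]
  have hfa : AnalyticOnNhd ℂ (St10c.ff q ω n) (Metric.eball (0 : ℂ × ℂ) 1) :=
    (St10c.hasfps hq1 hq2 hω hn).analyticOnNhd
  have hmaps : Set.MapsTo Linv
      {p : ℂ × ℂ | ‖p.1‖ < ω / 5 ∧
        ‖p.2‖ < ω * ((1 + q ^ (-2 : ℤ)) * q ^ (-(2 * (n : ℤ))) - 1) / (5 * Cq q)}
      (Metric.eball (0 : ℂ × ℂ) 1) := by
    intro p hp
    obtain ⟨h1, h2⟩ := hp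
    rw [← hgam] at h2
    show Linv p ∈ Metric.eball (0 : ℂ × ℂ) 1
    rw [mem_emetric_ball_zero_iff]
    have hn1 : ‖(Linv p).1‖ < 1 := by
      rw [hL1, norm_mul, norm_div]
      have h5 : ‖(5 : ℂ)‖ = 5 := by norm_num
      have hωn : ‖((ω : ℝ) : ℂ)‖ = ω := by
        rw [Complex.norm_real, Real.norm_eq_abs, abs_of_pos hω]
      rw [h5, hωn]
      rw [div_mul_eq_mul_div, div_lt_one hω]
      nlinarith
    have hn2 : ‖(Linv p).2‖ < 1 := by
      rw [hL2, norm_mul, norm_inv]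
      have hgn : ‖((St10c.gam q ω n : ℝ) : ℂ)‖ = St10c.gam q ω n := by
        rw [Complex.norm_real, Real.norm_eq_abs, abs_of_pos hgam_pos]
      rw [hgn, inv_mul_lt_iff₀ hgam_pos, mul_one]
      exact h2
    have : ‖Linv p‖ < 1 := by
      rw [Prod.norm_def]
      exact max_lt hn1 hn2
    rw [enorm_eq_nnnorm]
    exact_mod_cast this
  have hLa : AnalyticOnNhd ℂ (fun p : ℂ × ℂ => Linv p)
      {p : ℂ × ℂ | ‖p.1‖ < ω / 5 ∧
        ‖p.2‖ < ω * ((1 + q ^ (-2 : ℤ)) * q ^ (-(2 * (n : ℤ))) - 1) / (5 * Cq q)} :=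
    fun p _ => Linv.analyticAt p
  have hcomp := hfa.comp hLa hmaps
  have hfun : (fun p : ℂ × ℂ => (∑' k : ℕ, RSterm q ω n p.1 p.2 (k + 1)) - p.1)
      = (St10c.ff q ω n) ∘ (fun p : ℂ × ℂ => Linv p) :=
    funext fun p => (hfeq p).symm
  rw [hfun]
  exact hcomp
end

section
/- Let q > 1 be real and σ ∈ {1, −1}. On the complex vector space of finitely supported functions c : ℤ → ℂ, define linear operators P, U, U⁻¹, X by (P c)_k := σ q^{k} c_k, (U c)_k := c_{k+1}, (U⁻¹ c)_k := c_{k−1}, and (X c)_k := (i σ/(q − q^{−1})) (q^{1/2} q^{−(k+1)} c_{k+1} − q^{−1/2} q^{−(k−1)} c_{k−1}). Then these operators satisfy the defining relations of the q-deformed Heisenberg algebra: q^{1/2} X P − q^{−1/2} P X = i U, U X = q^{−1} X U, U P = q P U, and U U⁻¹ = U⁻¹ U = id. -/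
set_option maxHeartbeats 1000000


/-- For real `q > 1` and a sign `σ = ±1`, the coefficient-space operators
`(P c)_k = σ q^k c_k`, `(U c)_k = c_{k+1}`, `(U⁻¹ c)_k = c_{k-1}`,
`(X c)_k = (iσ/(q - q⁻¹))(q^{1/2} q^{-(k+1)} c_{k+1} - q^{-1/2} q^{-(k-1)} c_{k-1})`
satisfy the defining relations of the q-deformed Heisenberg algebra:
`q^{1/2} X P - q^{-1/2} P X = i U`, `U X = q^{-1} X U`, `U P = q P U`, `U U⁻¹ = U⁻¹ U = id`
on finitely supported functions. -/
theorem q_heisenberg_representation (q : ℝ) (hq : 1 < q) (σ : ℤ) (hσ : σ = 1 ∨ σ = -1)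
    (P U Ui X : (ℤ → ℂ) → (ℤ → ℂ))
    (hP : ∀ (c : ℤ → ℂ) (k : ℤ), P c k = (σ : ℂ) * (q : ℂ) ^ k * c k)
    (hU : ∀ (c : ℤ → ℂ) (k : ℤ), U c k = c (k + 1))
    (hUi : ∀ (c : ℤ → ℂ) (k : ℤ), Ui c k = c (k - 1))
    (hX : ∀ (c : ℤ → ℂ) (k : ℤ),
      X c k = Complex.I * (σ : ℂ) / ((q : ℂ) - (q : ℂ)⁻¹) *
        (((Real.sqrt q : ℝ) : ℂ) * (q : ℂ) ^ (-(k + 1)) * c (k + 1)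
          - ((Real.sqrt q : ℝ) : ℂ)⁻¹ * (q : ℂ) ^ (-(k - 1)) * c (k - 1))) :
    ∀ c : ℤ → ℂ, {k : ℤ | c k ≠ 0}.Finite →
      ∀ k : ℤ,
        ((Real.sqrt q : ℝ) : ℂ) * X (P c) k - ((Real.sqrt q : ℝ) : ℂ)⁻¹ * P (X c) k
            = Complex.I * U c k ∧
        U (X c) k = (q : ℂ)⁻¹ * X (U c) k ∧
        U (P c) k = (q : ℂ) * P (U c) k ∧
        U (Ui c) k = c k ∧ Ui (U c) k = c k := by
  intro c _ k
  have hq0R : (0 : ℝ) < q := lt_trans one_pos hq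
  have hq0 : (q : ℂ) ≠ 0 := by
    exact_mod_cast ne_of_gt hq0R
  have hsR : (0 : ℝ) < Real.sqrt q := Real.sqrt_pos.mpr hq0R
  have hs0 : ((Real.sqrt q : ℝ) : ℂ) ≠ 0 := by exact_mod_cast ne_of_gt hsR
  have hss : ((Real.sqrt q : ℝ) : ℂ) * ((Real.sqrt q : ℝ) : ℂ) = (q : ℂ) := by
    rw [← Complex.ofReal_mul, Real.mul_self_sqrt (le_of_lt hq0R)]
  have hdR : q - q⁻¹ ≠ 0 := by
    have : q⁻¹ < 1 := by
      rw [inv_lt_one_iff₀]; right; exact hq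
    nlinarith
  have hd : (q : ℂ) - (q : ℂ)⁻¹ ≠ 0 := by
    rw [show (q : ℂ) - (q : ℂ)⁻¹ = ((q - q⁻¹ : ℝ) : ℂ) by push_cast; ring]
    exact_mod_cast hdR
  have hk0 : (q : ℂ) ^ k ≠ 0 := zpow_ne_zero k hq0
  have e1 : (q : ℂ) ^ (k + 1) = (q : ℂ) ^ k * q := zpow_add_one₀ hq0 k
  have e2 : (q : ℂ) ^ (k - 1) = (q : ℂ) ^ k * (q : ℂ)⁻¹ := zpow_sub_one₀ hq0 k
  have e3 : (q : ℂ) ^ (-(k + 1)) = ((q : ℂ) ^ k * q)⁻¹ := by rw [zpow_neg, e1]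
  have e4 : (q : ℂ) ^ (-(k - 1)) = ((q : ℂ) ^ k * (q : ℂ)⁻¹)⁻¹ := by rw [zpow_neg, e2]
  have e5 : (q : ℂ) ^ (-(k + 1 + 1)) = ((q : ℂ) ^ k * q * q)⁻¹ := by
    rw [zpow_neg, zpow_add_one₀ hq0, e1]
  have e6 : (q : ℂ) ^ (-(k + 1 - 1)) = ((q : ℂ) ^ k)⁻¹ := by
    rw [zpow_neg, show k + 1 - 1 = k by ring]
  have f1 : k + 1 - 1 = k := by ring
  have f2 : k - 1 + 1 = k := by ring
  have h41 : ((Real.sqrt q : ℝ) : ℂ) ^ 4 - 1 ≠ 0 := by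
    have : ((Real.sqrt q : ℝ) : ℂ) ^ 4 = ((q * q : ℝ) : ℂ) := by
      push_cast
      rw [show (Real.sqrt q : ℂ) ^ 4 = (Real.sqrt q * Real.sqrt q : ℂ) * (Real.sqrt q * Real.sqrt q : ℂ) by ring, hss]
    rw [this]
    intro h
    have : (q * q : ℝ) = 1 := by exact_mod_cast sub_eq_zero.mp h
    nlinarith
  have hden : ((Real.sqrt q : ℝ) : ℂ) * ((Real.sqrt q : ℝ) : ℂ) - (((Real.sqrt q : ℝ) : ℂ) * ((Real.sqrt q : ℝ) : ℂ))⁻¹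
      = (((Real.sqrt q : ℝ) : ℂ) ^ 4 - 1) / (((Real.sqrt q : ℝ) : ℂ) * ((Real.sqrt q : ℝ) : ℂ)) := by
    field_simp
  refine ⟨?_, ?_, ?_, ?_, ?_⟩
  · simp only [hX, hP, hU]
    rw [e1, e2, e3, e4]
    set a := (q : ℂ) ^ k with ha
    have ha0 : a ≠ 0 := hk0
    set d := (q : ℂ) - (q : ℂ)⁻¹ with hdd
    have hd0 : d ≠ 0 := hd
    have hrel : d * (q : ℂ) = (q : ℂ) * (q : ℂ) - 1 := by
      rw [hdd]; field_simp
    have hss2 : ((Real.sqrt q : ℝ) : ℂ) * ((Real.sqrt q : ℝ) : ℂ) = (q : ℂ) := hss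
    clear_value d
    have hD1 : d * (a * (q : ℂ) * (((Real.sqrt q : ℝ) : ℂ) * a * (q : ℂ))) ≠ 0 :=
      mul_ne_zero hd0 (mul_ne_zero (mul_ne_zero ha0 hq0)
        (mul_ne_zero (mul_ne_zero hs0 ha0) hq0))
    have hD2 : ((Real.sqrt q : ℝ) : ℂ) * (d * (a * (q : ℂ) * (((Real.sqrt q : ℝ) : ℂ) * a))) ≠ 0 :=
      mul_ne_zero hs0 (mul_ne_zero hd0 (mul_ne_zero (mul_ne_zero ha0 hq0)
        (mul_ne_zero hs0 ha0)))
    rcases hσ with h | h <;> subst h <;> push_cast <;>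
      field_simp [hs0, ha0, hd0, hq0] <;>
      linear_combination
        (((Real.sqrt q : ℝ) : ℂ) ^ 2 * (q : ℂ) * c (k + 1)
            - (q : ℂ) * c (k - 1)) * hss2
          - ((Real.sqrt q : ℝ) : ℂ) ^ 2 * c (k + 1) * hrel
  · simp only [hU, hX]
    rw [f2, e3, e5, e6, e4]
    set d := (q : ℂ) - (q : ℂ)⁻¹ with hdd
    have hd0 : d ≠ 0 := hd
    clear_value d
    set a := (q : ℂ) ^ k with ha
    have ha0 : a ≠ 0 := hk0
    rcases hσ with h | h <;> subst h <;> push_cast <;> field_simp [hs0, ha0, hd0] <;> ring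
  · simp only [hU, hP]
    rw [e1]
    ring
  · rw [hU, hUi, f1]
  · rw [hUi, hU, f2]
end
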